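/- arXiv:2310.02637 — 6 statements merged into one kernel-verified Lean document; each statement's English description precedes it below -/
import Mathlib

section
/- Let {(P_i, R_i) : i ∈ I} be a compact representation of the bipartite graph I(P,R), and let G be the five-layer network with source s, edges (s,p) of capacity s_p, a vertex v_i for each i ∈ I with edges (p, v_i) for p ∈ P_i and (v_i, r) for r ∈ R_i of capacity μ = min(Σ s_p, Σ d_r), edges (r,t) of capacity d_r, and sink t. Then G admits an s-t flow of value η if and only if there exists a matching of value η for the matching problem on I(P,R) with supplies s_p and demands d_r. -/
/-!
A flow in the five-layer network and a matching carry the same information once the middle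
layer is collapsed or re-created. Given a flow, the flow entering `v_i` is spread over the
edges leaving it in proportion to their flow, so each path `p → v_i → r` carries
`f₁ p i * f₂ i r / (flow through v_i)`; summing over `i` gives a matching with the same
marginals. Given a matching, each edge `(p, r)` is routed through one block `i` of the
representation containing it. The capacity `μ` of the middle edges is never binding, since
every row or column sum of a matching is at most `min (∑ s) (∑ d)`.
-/

open Finset

section Marginals

variable {α β : Type*} [Fintype α] [Fintype β]

theorem sum_mul_div_sum_eq_of_sum_eq {x : α → ℝ} {y : β → ℝ} (hx : ∀ a, 0 ≤ x a)
    (hxy : ∑ a, x a = ∑ b, y b) (a : α) : ∑ b, x a * y b / ∑ a', x a' = x a := by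
  rcases eq_or_ne (∑ a', x a') 0 with h | h
  · simp [(sum_eq_zero_iff_of_nonneg fun a' _ => hx a').1 h a (mem_univ a)]
  · rw [← sum_div, ← mul_sum, ← hxy, mul_div_assoc, div_self h, mul_one]

theorem sum_mul_div_sum_eq_of_sum_eq' {x : α → ℝ} {y : β → ℝ} (hy : ∀ b, 0 ≤ y b)
    (hxy : ∑ a, x a = ∑ b, y b) (b : β) : ∑ a, x a * y b / ∑ a', x a' = y b := by
  simp_rw [mul_comm (x _), hxy]
  exact sum_mul_div_sum_eq_of_sum_eq hy hxy.symm b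

theorem sum_le_min_of_sum_le {a : α → β → ℝ} {s : α → ℝ} {d : β → ℝ}
    (ha : ∀ x y, 0 ≤ a x y) (hs : ∀ x, 0 ≤ s x)
    (has : ∀ x, ∑ y, a x y ≤ s x) (had : ∀ y, ∑ x, a x y ≤ d y) (x : α) :
    ∑ y, a x y ≤ min (∑ x, s x) (∑ y, d y) :=
  le_min ((has x).trans (single_le_sum (fun x' _ => hs x') (mem_univ x)))
    (sum_le_sum fun y _ => (single_le_sum (fun x' _ => ha x' y) (mem_univ x)).trans (had y))

end Marginals

section Network

variable {P R ι : Type*}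

/-- `c p r = none` leaves the edge `(p, r)` unrouted, so `ι` need not be nonempty. -/
def routeAlong [DecidableEq ι] (c : P → R → Option ι) (a : P → R → ℝ) (p : P) (r : R)
    (i : ι) : ℝ :=
  if c p r = some i then a p r else 0

section RouteAlong

variable [DecidableEq ι] {c : P → R → Option ι} {a : P → R → ℝ} {p : P} {r : R} {i : ι}

theorem routeAlong_nonneg (ha : 0 ≤ a p r) : 0 ≤ routeAlong c a p r i := by
  unfold routeAlong
  split_ifs
  exacts [ha, le_rfl]

theorem routeAlong_le (ha : 0 ≤ a p r) : routeAlong c a p r i ≤ a p r := by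
  unfold routeAlong
  split_ifs
  exacts [le_rfl, ha]

theorem eq_some_of_routeAlong_ne_zero (h : routeAlong c a p r i ≠ 0) :
    c p r = some i ∧ a p r ≠ 0 := by
  unfold routeAlong at h
  split_ifs at h with hc
  exacts [⟨hc, h⟩, absurd rfl h]

theorem sum_routeAlong {I : Finset ι} (hc : a p r ≠ 0 → ∃ i ∈ I, c p r = some i) :
    ∑ i ∈ I, routeAlong c a p r i = a p r := by
  by_cases ha : a p r = 0
  · simp [routeAlong, ha]
  · obtain ⟨i, hi, hci⟩ := hc ha
    simp [routeAlong, hci, hi]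

end RouteAlong

theorem exists_route {E : P → R → Prop} {I : Finset ι} {Ps : ι → Finset P}
    {Rs : ι → Finset R} (hrep : ∀ p r, E p r ↔ ∃ i ∈ I, p ∈ Ps i ∧ r ∈ Rs i) :
    ∃ c : P → R → Option ι, ∀ p r, E p r → ∃ i ∈ I, c p r = some i ∧ p ∈ Ps i ∧ r ∈ Rs i := by
  classical
  refine ⟨fun p r => if h : E p r then some ((hrep p r).1 h).choose else none, fun p r h => ?_⟩
  obtain ⟨hi, hp, hr⟩ := ((hrep p r).1 h).choose_spec
  exact ⟨_, hi, dif_pos h, hp, hr⟩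

variable [Fintype P]

noncomputable def proportionalSplit (I : Finset ι) (f₁ : P → ι → ℝ) (f₂ : ι → R → ℝ)
    (p : P) (r : R) : ℝ :=
  ∑ i ∈ I, f₁ p i * f₂ i r / ∑ q, f₁ q i

section ProportionalSplit

variable {I : Finset ι} {f₁ : P → ι → ℝ} {f₂ : ι → R → ℝ}

theorem proportionalSplit_nonneg (h₁ : ∀ p i, 0 ≤ f₁ p i) (h₂ : ∀ i r, 0 ≤ f₂ i r)
    (p : P) (r : R) : 0 ≤ proportionalSplit I f₁ f₂ p r :=
  sum_nonneg fun i _ =>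
    div_nonneg (mul_nonneg (h₁ p i) (h₂ i r)) (sum_nonneg fun q _ => h₁ q i)

theorem exists_of_proportionalSplit_ne_zero {p : P} {r : R}
    (h : proportionalSplit I f₁ f₂ p r ≠ 0) : ∃ i ∈ I, f₁ p i ≠ 0 ∧ f₂ i r ≠ 0 := by
  obtain ⟨i, hi, h⟩ := exists_ne_zero_of_sum_ne_zero h
  exact ⟨i, hi, mul_ne_zero_iff.1 (div_ne_zero_iff.1 h).1⟩

variable [Fintype R]

theorem sum_proportionalSplit_right (h₁ : ∀ p i, 0 ≤ f₁ p i)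
    (hcons : ∀ i, ∑ p, f₁ p i = ∑ r, f₂ i r) (p : P) :
    ∑ r, proportionalSplit I f₁ f₂ p r = ∑ i ∈ I, f₁ p i := by
  simp only [proportionalSplit]
  rw [sum_comm]
  exact sum_congr rfl fun i _ => sum_mul_div_sum_eq_of_sum_eq (h₁ · i) (hcons i) p

theorem sum_proportionalSplit_left (h₂ : ∀ i r, 0 ≤ f₂ i r)
    (hcons : ∀ i, ∑ p, f₁ p i = ∑ r, f₂ i r) (r : R) :
    ∑ p, proportionalSplit I f₁ f₂ p r = ∑ i ∈ I, f₂ i r := by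
  simp only [proportionalSplit]
  rw [sum_comm]
  exact sum_congr rfl fun i _ => sum_mul_div_sum_eq_of_sum_eq' (h₂ i) (hcons i) r

end ProportionalSplit

variable [Fintype R]

/-- `fs`, `f₁`, `f₂`, `ft` are the flows on the layers `s → p`, `p → v_i`, `v_i → r`, `r → t`. -/
def HasFlowOfValue (I : Finset ι) (Ps : ι → Finset P) (Rs : ι → Finset R)
    (s : P → ℝ) (d : R → ℝ) (μ η : ℝ) : Prop :=
  ∃ (fs : P → ℝ) (f₁ : P → ι → ℝ) (f₂ : ι → R → ℝ) (ft : R → ℝ),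
    (∀ p, 0 ≤ fs p) ∧ (∀ p i, 0 ≤ f₁ p i) ∧ (∀ i r, 0 ≤ f₂ i r) ∧ (∀ r, 0 ≤ ft r) ∧
    (∀ p, fs p ≤ s p) ∧ (∀ r, ft r ≤ d r) ∧
    (∀ p i, f₁ p i ≤ μ) ∧ (∀ i r, f₂ i r ≤ μ) ∧
    (∀ p i, f₁ p i ≠ 0 → i ∈ I ∧ p ∈ Ps i) ∧
    (∀ i r, f₂ i r ≠ 0 → i ∈ I ∧ r ∈ Rs i) ∧
    (∀ p, fs p = ∑ i ∈ I, f₁ p i) ∧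
    (∀ i, ∑ p, f₁ p i = ∑ r, f₂ i r) ∧
    (∀ r, ft r = ∑ i ∈ I, f₂ i r) ∧
    ∑ p, fs p = η

def HasMatchingOfValue (E : P → R → Prop) (s : P → ℝ) (d : R → ℝ) (η : ℝ) : Prop :=
  ∃ a : P → R → ℝ,
    (∀ p r, 0 ≤ a p r) ∧ (∀ p r, a p r ≠ 0 → E p r) ∧
    (∀ p, ∑ r, a p r ≤ s p) ∧ (∀ r, ∑ p, a p r ≤ d r) ∧
    ∑ p, ∑ r, a p r = η

theorem HasFlowOfValue.hasMatchingOfValue {E : P → R → Prop} {s : P → ℝ} {d : R → ℝ}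
    {I : Finset ι} {Ps : ι → Finset P} {Rs : ι → Finset R} {μ η : ℝ}
    (hrep : ∀ p r, E p r ↔ ∃ i ∈ I, p ∈ Ps i ∧ r ∈ Rs i)
    (h : HasFlowOfValue I Ps Rs s d μ η) : HasMatchingOfValue E s d η := by
  obtain ⟨fs, f₁, f₂, ft, -, h₁, h₂, -, hs, hd, -, -, hsupp₁, hsupp₂, hfs, hcons, hft, rfl⟩ := h
  have hrow (p : P) : ∑ r, proportionalSplit I f₁ f₂ p r = fs p :=
    (sum_proportionalSplit_right h₁ hcons p).trans (hfs p).symm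
  have hcol (r : R) : ∑ p, proportionalSplit I f₁ f₂ p r = ft r :=
    (sum_proportionalSplit_left h₂ hcons r).trans (hft r).symm
  refine ⟨proportionalSplit I f₁ f₂, proportionalSplit_nonneg h₁ h₂, fun p r hpr => ?_,
    fun p => (hrow p).trans_le (hs p), fun r => (hcol r).trans_le (hd r),
    sum_congr rfl fun p _ => hrow p⟩
  obtain ⟨i, hi, hp, hr⟩ := exists_of_proportionalSplit_ne_zero hpr
  exact (hrep p r).2 ⟨i, hi, (hsupp₁ p i hp).2, (hsupp₂ i r hr).2⟩

theorem HasMatchingOfValue.hasFlowOfValue {E : P → R → Prop} {s : P → ℝ} {d : R → ℝ}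
    {I : Finset ι} {Ps : ι → Finset P} {Rs : ι → Finset R} {η : ℝ}
    (hrep : ∀ p r, E p r ↔ ∃ i ∈ I, p ∈ Ps i ∧ r ∈ Rs i)
    (hs : ∀ p, 0 ≤ s p) (hd : ∀ r, 0 ≤ d r) (h : HasMatchingOfValue E s d η) :
    HasFlowOfValue I Ps Rs s d (min (∑ p, s p) (∑ r, d r)) η := by
  obtain ⟨a, ha, haE, has, had, rfl⟩ := h
  obtain ⟨c, hc⟩ := exists_route hrep
  classical
  have hmem {p : P} {r : R} {i : ι} (h : routeAlong c a p r i ≠ 0) :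
      i ∈ I ∧ p ∈ Ps i ∧ r ∈ Rs i := by
    obtain ⟨hci, hpr⟩ := eq_some_of_routeAlong_ne_zero h
    obtain ⟨j, hj, hcj, hp, hr⟩ := hc p r (haE p r hpr)
    obtain rfl : i = j := Option.some_injective _ (hci.symm.trans hcj)
    exact ⟨hj, hp, hr⟩
  have hsum (p : P) (r : R) : ∑ i ∈ I, routeAlong c a p r i = a p r :=
    sum_routeAlong fun hpr => (hc p r (haE p r hpr)).imp fun i ⟨hi, hci, _⟩ => ⟨hi, hci⟩
  have hrow (p : P) : ∑ r, a p r ≤ min (∑ p, s p) (∑ r, d r) :=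
    sum_le_min_of_sum_le ha hs has had p
  have hcol (r : R) : ∑ p, a p r ≤ min (∑ p, s p) (∑ r, d r) :=
    by rw [min_comm]; exact sum_le_min_of_sum_le (fun r p => ha p r) hd had has r
  refine ⟨fun p => ∑ r, a p r, fun p i => ∑ r, routeAlong c a p r i,
    fun i r => ∑ p, routeAlong c a p r i, fun r => ∑ p, a p r,
    fun p => sum_nonneg fun r _ => ha p r,
    fun p i => sum_nonneg fun r _ => routeAlong_nonneg (ha p r),
    fun i r => sum_nonneg fun p _ => routeAlong_nonneg (ha p r),
    fun r => sum_nonneg fun p _ => ha p r, has, had,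
    fun p i => (sum_le_sum fun r _ => routeAlong_le (ha p r)).trans (hrow p),
    fun i r => (sum_le_sum fun p _ => routeAlong_le (ha p r)).trans (hcol r),
    fun p i h => ?_, fun i r h => ?_,
    fun p => by rw [sum_comm]; exact sum_congr rfl fun r _ => (hsum p r).symm,
    fun i => sum_comm,
    fun r => by rw [sum_comm]; exact sum_congr rfl fun p _ => (hsum p r).symm, rfl⟩
  · obtain ⟨r, -, hr⟩ := exists_ne_zero_of_sum_ne_zero h
    exact (hmem hr).imp_right And.left
  · obtain ⟨p, -, hp⟩ := exists_ne_zero_of_sum_ne_zero h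
    exact (hmem hp).imp_right And.right

end Network

theorem stmt5_general {P R ι : Type*} [Fintype P] [Fintype R]
    (E : P → R → Prop) (s : P → ℝ) (d : R → ℝ)
    (hs : ∀ p, 0 < s p) (hd : ∀ r, 0 < d r)
    (I : Finset ι) (Ps : ι → Finset P) (Rs : ι → Finset R)
    (hrep : ∀ p r, E p r ↔ ∃ i ∈ I, p ∈ Ps i ∧ r ∈ Rs i)
    (μ : ℝ) (hμ : μ = min (∑ p, s p) (∑ r, d r)) (η : ℝ) :
    (∃ (fs : P → ℝ) (f₁ : P → ι → ℝ) (f₂ : ι → R → ℝ) (ft : R → ℝ),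
        (∀ p, 0 ≤ fs p) ∧ (∀ p i, 0 ≤ f₁ p i) ∧ (∀ i r, 0 ≤ f₂ i r) ∧ (∀ r, 0 ≤ ft r) ∧
        (∀ p, fs p ≤ s p) ∧ (∀ r, ft r ≤ d r) ∧
        (∀ p i, f₁ p i ≤ μ) ∧ (∀ i r, f₂ i r ≤ μ) ∧
        (∀ p i, f₁ p i ≠ 0 → i ∈ I ∧ p ∈ Ps i) ∧
        (∀ i r, f₂ i r ≠ 0 → i ∈ I ∧ r ∈ Rs i) ∧
        (∀ p, fs p = ∑ i ∈ I, f₁ p i) ∧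
        (∀ i, ∑ p, f₁ p i = ∑ r, f₂ i r) ∧
        (∀ r, ft r = ∑ i ∈ I, f₂ i r) ∧
        ∑ p, fs p = η) ↔
    (∃ a : P → R → ℝ,
        (∀ p r, 0 ≤ a p r) ∧ (∀ p r, a p r ≠ 0 → E p r) ∧
        (∀ p, ∑ r, a p r ≤ s p) ∧ (∀ r, ∑ p, a p r ≤ d r) ∧
        ∑ p, ∑ r, a p r = η) := by
  subst hμ
  exact ⟨HasFlowOfValue.hasMatchingOfValue hrep,
    HasMatchingOfValue.hasFlowOfValue hrep (fun p => (hs p).le) (fun r => (hd r).le)⟩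

/-- Let `{(Ps i, Rs i) : i ∈ I}` be a compact representation of the bipartite incidence
graph `E` on `P ⊔ R`, and let `G` be the five-layer network with source, feeder edges of
capacity `s p`, a middle vertex for each `i ∈ I` with edges from `Ps i` and to `Rs i` of
capacity `μ = min(Σ s, Σ d)`, draining edges of capacity `d r`, and sink. Then `G` admits
an `s`-`t` flow of value `η` iff the matching problem on `E` with supplies `s` and
demands `d` admits a matching of value `η`. -/
theorem stmt5 {P R ι : Type*} [Fintype P] [Fintype R] [DecidableEq ι]
    (E : P → R → Prop) (s : P → ℝ) (d : R → ℝ)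
    (hs : ∀ p, 0 < s p) (hd : ∀ r, 0 < d r)
    (I : Finset ι) (Ps : ι → Finset P) (Rs : ι → Finset R)
    (hrep : ∀ p r, E p r ↔ ∃ i ∈ I, p ∈ Ps i ∧ r ∈ Rs i)
    (μ : ℝ) (hμ : μ = min (∑ p, s p) (∑ r, d r)) (η : ℝ) :
    (∃ (fs : P → ℝ) (f₁ : P → ι → ℝ) (f₂ : ι → R → ℝ) (ft : R → ℝ),
        (∀ p, 0 ≤ fs p) ∧ (∀ p i, 0 ≤ f₁ p i) ∧ (∀ i r, 0 ≤ f₂ i r) ∧ (∀ r, 0 ≤ ft r) ∧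
        (∀ p, fs p ≤ s p) ∧ (∀ r, ft r ≤ d r) ∧
        (∀ p i, f₁ p i ≤ μ) ∧ (∀ i r, f₂ i r ≤ μ) ∧
        (∀ p i, f₁ p i ≠ 0 → i ∈ I ∧ p ∈ Ps i) ∧
        (∀ i r, f₂ i r ≠ 0 → i ∈ I ∧ r ∈ Rs i) ∧
        (∀ p, fs p = ∑ i ∈ I, f₁ p i) ∧
        (∀ i, ∑ p, f₁ p i = ∑ r, f₂ i r) ∧
        (∀ r, ft r = ∑ i ∈ I, f₂ i r) ∧
        ∑ p, fs p = η) ↔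
    (∃ a : P → R → ℝ,
        (∀ p r, 0 ≤ a p r) ∧ (∀ p r, a p r ≠ 0 → E p r) ∧
        (∀ p, ∑ r, a p r ≤ s p) ∧ (∀ r, ∑ p, a p r ≤ d r) ∧
        ∑ p, ∑ r, a p r = η) :=
  stmt5_general E s d hs hd I Ps Rs hrep μ hμ η
end

section
/- In Dinitz' algorithm with pruning: let f be a flow in the bipartite flow network G, let g be a blocking flow in the level graph L(f), let h = f + g, and let f' be obtained from h by pruning (so that H(f') is a forest and a subgraph of H(h)). Then for every edge (v,w) of the residual graph G(f'), the level ℓ(w) of w in L(f) is at most ℓ(v) + 1. -/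
open scoped Classical

/-- Vertices of the four-layer network: source, providers `P`, consumers `R`, sink. -/
abbrev Vtx (P R : Type*) := (Unit ⊕ P) ⊕ (R ⊕ Unit)

variable {P R : Type*}

def sVx : Vtx P R := Sum.inl (Sum.inl ())
def tVx : Vtx P R := Sum.inr (Sum.inr ())
def pVx (p : P) : Vtx P R := Sum.inl (Sum.inr p)
def rVx (r : R) : Vtx P R := Sum.inr (Sum.inl r)

section
variable [Fintype P] [Fintype R] (E : P → R → Prop) (s : P → ℝ) (d : R → ℝ)

/-- A flow in the network: nonnegative, supported on edges of the bipartite graph `E`,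
respecting the supply capacities of feeder edges and demand capacities of draining edges
(flow conservation at `P` and `R` is implicit: the flow on the feeder edge `(s,p)` is
`∑ r, f p r` and the flow on the draining edge `(r,t)` is `∑ p, f p r`). -/
def IsFlow (f : P → R → ℝ) : Prop :=
  (∀ p r, 0 ≤ f p r) ∧ (∀ p r, f p r ≠ 0 → E p r) ∧
  (∀ p, ∑ r, f p r ≤ s p) ∧ (∀ r, ∑ p, f p r ≤ d r)

/-- Edges of the residual graph `G(f)`: edges with positive residual capacity. -/
def Res (f : P → R → ℝ) : Vtx P R → Vtx P R → Prop
  | Sum.inl (Sum.inl _), Sum.inl (Sum.inr p) => ∑ r, f p r < s p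
  | Sum.inl (Sum.inr p), Sum.inl (Sum.inl _) => 0 < ∑ r, f p r
  | Sum.inl (Sum.inr p), Sum.inr (Sum.inl r) => E p r
  | Sum.inr (Sum.inl r), Sum.inl (Sum.inr p) => 0 < f p r
  | Sum.inr (Sum.inl r), Sum.inr (Sum.inr _) => ∑ p, f p r < d r
  | Sum.inr (Sum.inr _), Sum.inr (Sum.inl r) => 0 < ∑ p, f p r
  | _, _ => False

end

/-- `ReachIn Rel m u v`: there is a directed walk of length `m` from `u` to `v`. -/
def ReachIn {α : Type*} (Rel : α → α → Prop) : ℕ → α → α → Prop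
  | 0 => fun u v => u = v
  | n + 1 => fun u v => ∃ w, Rel u w ∧ ReachIn Rel n w v

/-- BFS distance (level) from `src` to `v` in a directed graph, valued in `ℕ∞`. -/
noncomputable def lvl {α : Type*} (Rel : α → α → Prop) (src v : α) : ℕ∞ :=
  sInf {n : ℕ∞ | ∃ m : ℕ, ReachIn Rel m src v ∧ n = (m : ℕ∞)}

section
variable [Fintype P] [Fintype R] (E : P → R → Prop) (s : P → ℝ) (d : R → ℝ)

/-- Edges of the level graph `L(f)`: residual edges `(u,v)` with `ℓ(v) = ℓ(u) + 1`. -/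
def LevelEdge (f : P → R → ℝ) (u v : Vtx P R) : Prop :=
  Res E s d f u v ∧ lvl (Res E s d f) sVx v = lvl (Res E s d f) sVx u + 1

/-- The edge `(u,v)` of the level graph is saturated by the augmentation `g`
(with respect to the base flow `f`): a feeder edge is saturated if the new feeder flow
equals the supply, a backward edge `(r,p)` if the new flow on `(p,r)` is zero, a draining
edge if the new draining flow equals the demand; forward edges (infinite capacity) are
never saturated. -/
def Saturated (f g : P → R → ℝ) : Vtx P R → Vtx P R → Prop
  | Sum.inl (Sum.inl _), Sum.inl (Sum.inr p) => ∑ r, (f p r + g p r) = s p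
  | Sum.inr (Sum.inl r), Sum.inl (Sum.inr p) => f p r + g p r = 0
  | Sum.inr (Sum.inl r), Sum.inr (Sum.inr _) => ∑ p, (f p r + g p r) = d r
  | _, _ => False

/-- `g` is a blocking flow in the level graph `L(f)` (recorded as the signed change on
the pairs `P × R`; positive values use forward level edges, negative values use backward
level edges): the augmented function `f + g` is again a flow, and every path from `s` to
`t` in `L(f)` contains an edge saturated by `g`. -/
def IsBlocking (f g : P → R → ℝ) : Prop :=
  (∀ p r, 0 < g p r → LevelEdge E s d f (pVx p) (rVx r)) ∧
  (∀ p r, g p r < 0 → LevelEdge E s d f (rVx r) (pVx p)) ∧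
  (∀ p, 0 ≤ ∑ r, g p r) ∧ (∀ r, 0 ≤ ∑ p, g p r) ∧
  (∀ p, 0 < ∑ r, g p r → LevelEdge E s d f sVx (pVx p)) ∧
  (∀ r, 0 < ∑ p, g p r → LevelEdge E s d f (rVx r) tVx) ∧
  IsFlow E s d (fun p r => f p r + g p r) ∧
  (∀ l : List (Vtx P R), l.Chain' (LevelEdge E s d f) →
    l.head? = some sVx → l.getLast? = some tVx →
    ∃ uv ∈ l.zip l.tail, Saturated s d f g uv.1 uv.2)

end

/-- The undirected support graph `H(f)` on `P ⊕ R`: an edge between `p` and `r`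
whenever `f p r > 0`. -/
def suppGraph {P R : Type*} (f : P → R → ℝ) : SimpleGraph (P ⊕ R) :=
  SimpleGraph.fromRel (fun x y =>
    match x, y with
    | Sum.inl p, Sum.inr r => 0 < f p r
    | _, _ => False)

/-- `f'` is obtained from `h` by pruning (repeatedly cancelling flow around cycles of the
support graph): `f'` is nonnegative, has the same feeder and draining flows as `h` (hence
the same value), is supported on the support of `h`, and its support graph is a forest. -/
def Pruned {P R : Type*} [Fintype P] [Fintype R] (h f' : P → R → ℝ) : Prop :=
  (∀ p r, 0 ≤ f' p r) ∧
  (∀ p, ∑ r, f' p r = ∑ r, h p r) ∧ (∀ r, ∑ p, f' p r = ∑ p, h p r) ∧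
  (∀ p r, f' p r ≠ 0 → h p r ≠ 0) ∧
  (suppGraph f').IsAcyclic

theorem ReachIn.snoc {α : Type*} {Rel : α → α → Prop} :
    ∀ {m : ℕ} {u v w : α}, ReachIn Rel m u v → Rel v w → ReachIn Rel (m + 1) u w
  | 0, _, _, w, rfl, hvw => ⟨w, hvw, rfl⟩
  | _ + 1, _, _, _, ⟨x, hux, hx⟩, hvw => ⟨x, hux, hx.snoc hvw⟩

theorem lvl_le_of_reachIn {α : Type*} {Rel : α → α → Prop} {src v : α} {m : ℕ}
    (h : ReachIn Rel m src v) : lvl Rel src v ≤ m :=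
  sInf_le ⟨m, h, rfl⟩

theorem lvl_le_add_one_of_rel {α : Type*} {Rel : α → α → Prop} {src v w : α}
    (h : Rel v w) : lvl Rel src w ≤ lvl Rel src v + 1 := by
  rcases {n : ℕ∞ | ∃ m : ℕ, ReachIn Rel m src v ∧ n = m}.eq_empty_or_nonempty with hempty | hne
  · simp [lvl, hempty]
  · obtain ⟨m, hm, hlvl⟩ := csInf_mem hne
    rw [show lvl Rel src v = m from hlvl]
    exact_mod_cast lvl_le_of_reachIn (hm.snoc h)

section Pruning

variable [Fintype P] [Fintype R] {E : P → R → Prop} {s : P → ℝ} {d : R → ℝ}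
  {f g f' : P → R → ℝ}

/- Pruning keeps the support and the feeder/draining flows of `f + g`, so any residual
capacity that `f` lacks was created by `g`, which only runs along level edges. -/
theorem res_or_levelEdge_swap_of_pruned (hg : IsBlocking E s d f g)
    (hprune : Pruned (fun p r => f p r + g p r) f') :
    ∀ u v : Vtx P R, Res E s d f' u v → Res E s d f u v ∨ LevelEdge E s d f v u := by
  obtain ⟨hforward, -, hfeed, hdrain, hfeedLevel, hdrainLevel, ⟨hnonneg, -⟩, -⟩ := hg
  obtain ⟨-, hfeed', hdrain', hsupp, -⟩ := hprune
  have feeder p : ∑ r, f' p r = ∑ r, f p r + ∑ r, g p r := by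
    rw [hfeed', Finset.sum_add_distrib]
  have drain r : ∑ p, f' p r = ∑ p, f p r + ∑ p, g p r := by
    rw [hdrain', Finset.sum_add_distrib]
  rintro ((⟨⟩ | p) | (r | ⟨⟩)) ((⟨⟩ | p') | (r' | ⟨⟩)) hres <;>
    simp only [Res] at hres ⊢ <;> try contradiction
  · exact .inl (by linarith [feeder p', hfeed p'])
  · rcases lt_or_ge 0 (∑ r, f p r) with hf | hf
    · exact .inl hf
    · exact .inr (hfeedLevel p (by linarith [feeder p]))
  · exact .inl hres
  · have hpos : 0 < f p' r + g p' r :=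
      (hnonneg p' r).lt_of_ne (hsupp p' r hres.ne').symm
    rcases lt_or_ge 0 (f p' r) with hf | hf
    · exact .inl hf
    · exact .inr (hforward p' r (by linarith))
  · exact .inl (by linarith [drain r, hdrain r])
  · rcases lt_or_ge 0 (∑ p, f p r') with hf | hf
    · exact .inl hf
    · exact .inr (hdrainLevel r' (by linarith [drain r']))

end Pruning

theorem stmt11_general {P R : Type*} [Fintype P] [Fintype R]
    (E : P → R → Prop) (s : P → ℝ) (d : R → ℝ)
    (f g f' : P → R → ℝ)
    (hg : IsBlocking E s d f g)
    (hprune : Pruned (fun p r => f p r + g p r) f') :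
    ∀ u v : Vtx P R, Res E s d f' u v →
      lvl (Res E s d f) sVx v ≤ lvl (Res E s d f) sVx u + 1 := by
  intro u v huv
  rcases res_or_levelEdge_swap_of_pruned hg hprune u v huv with hold | ⟨-, hlevel⟩
  · exact lvl_le_add_one_of_rel hold
  · rw [hlevel, add_assoc]
    exact le_self_add

/-- One phase of Dinitz' algorithm with pruning: if `f` is a flow, `g` a blocking flow in
the level graph `L(f)`, and `f'` is obtained from `h = f + g` by pruning, then for every
edge `(v,w)` of the residual graph `G(f')`, the level of `w` in `L(f)` is at most the
level of `v` plus one. -/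
theorem stmt11 {P R : Type*} [Fintype P] [Fintype R]
    (E : P → R → Prop) (s : P → ℝ) (d : R → ℝ)
    (f g f' : P → R → ℝ)
    (hf : IsFlow E s d f)
    (hg : IsBlocking E s d f g)
    (hprune : Pruned (fun p r => f p r + g p r) f') :
    ∀ u v : Vtx P R, Res E s d f' u v →
      lvl (Res E s d f) sVx v ≤ lvl (Res E s d f) sVx u + 1 :=
  stmt11_general E s d f g f' hg hprune
end

section
/- In Dinitz' algorithm with pruning on the bipartite flow network G, the distance from s to t in the residual graph strictly increases after each augmentation by a blocking flow followed by pruning. Consequently, since the level of t is always odd, at least 3, and at most 2n+1 (where n = |P| + |R|), at most n successive such augmentations yield a maximum flow in G. -/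
open scoped Classical

variable {P R : Type*}

/-- One augmentation of Dinitz' algorithm with pruning: augment the flow `f` by a
blocking flow `g` of the level graph `L(f)` and prune the result. -/
def DinitzStep {P R : Type*} [Fintype P] [Fintype R]
    (E : P → R → Prop) (s : P → ℝ) (d : R → ℝ) (f f' : P → R → ℝ) : Prop :=
  ∃ g, IsBlocking E s d f g ∧ Pruned (fun p r => f p r + g p r) f'

/-!
Let `ℓ` be the BFS level in `G(f)` and `f'` the flow after one augmentation. Pruning creates
no residual edges, and augmenting by `g` creates only reverses of edges of `L(f)`, so `ℓ`
rises by at most one along every edge of `G(f')`. Hence an `s`-`t` path in `G(f')` has length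
at least `ℓ t`, and a path of length exactly `ℓ t` runs through `L(f)`; but each such path
contains an edge saturated by the blocking flow `g`, which is not residual for `f + g`, let
alone for `f'`. So the distance from `s` to `t` increases. It is at least `3` and, while `t` is
reachable, below the number `n + 2` of vertices, so after `n` steps `t` is unreachable; the
set of vertices still reachable from `s` is then a cut saturated by the flow, which is
therefore maximum.
-/

section Walks
variable {α : Type*} {Rel : α → α → Prop}

theorem reachIn_add : ∀ {a b : ℕ} {u w v : α},
    ReachIn Rel a u w → ReachIn Rel b w v → ReachIn Rel (a + b) u v
  | 0, _, _, _, _, rfl, h => by simpa using h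
  | _ + 1, _, _, _, _, ⟨x, hx, h⟩, h' => by
      rw [Nat.add_right_comm]
      exact ⟨x, hx, reachIn_add h h'⟩

theorem reachIn_succ_right {m : ℕ} {u v : α} :
    ReachIn Rel (m + 1) u v ↔ ∃ w, ReachIn Rel m u w ∧ Rel w v := by
  refine ⟨fun h => ?_, fun ⟨w, hw, hwv⟩ => reachIn_add hw ⟨v, hwv, rfl⟩⟩
  induction m generalizing u with
  | zero => obtain ⟨w, huw, rfl⟩ := h; exact ⟨u, rfl, huw⟩
  | succ m ih =>
    obtain ⟨x, hux, hx⟩ := h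
    obtain ⟨w, hxw, hwv⟩ := ih hx
    exact ⟨w, ⟨x, hux, hxw⟩, hwv⟩

theorem reachIn_iff_exists_fun {m : ℕ} {u v : α} :
    ReachIn Rel m u v ↔ ∃ w : ℕ → α, w 0 = u ∧ w m = v ∧ ∀ i < m, Rel (w i) (w (i + 1)) := by
  induction m generalizing u with
  | zero => exact ⟨fun h => ⟨fun _ => u, rfl, h, by omega⟩, fun ⟨w, h0, hm, _⟩ => h0 ▸ hm⟩
  | succ m ih =>
    constructor
    · rintro ⟨x, hux, hx⟩
      obtain ⟨w, rfl, hwm, hw⟩ := ih.mp hx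
      refine ⟨fun | 0 => u | i + 1 => w i, rfl, hwm, fun i hi => ?_⟩
      cases i with
      | zero => exact hux
      | succ i => exact hw i (by omega)
    · rintro ⟨w, rfl, hwm, hw⟩
      exact ⟨w 1, hw 0 (by omega),
        ih.mpr ⟨fun i => w (i + 1), rfl, hwm, fun i hi => hw (i + 1) (by omega)⟩⟩

theorem exists_reachIn_lt_card [Fintype α] {u v : α} :
    ∀ {m : ℕ}, ReachIn Rel m u v → ∃ m' < Fintype.card α, ReachIn Rel m' u v := by
  intro m
  induction m using Nat.strong_induction_on with
  | _ m ih =>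
    intro h
    by_cases hm : m < Fintype.card α
    · exact ⟨m, hm, h⟩
    obtain ⟨w, rfl, rfl, hw⟩ := reachIn_iff_exists_fun.mp h
    have segment : ∀ a c, a + c ≤ m → ReachIn Rel c (w a) (w (a + c)) := fun a c hac =>
      reachIn_iff_exists_fun.mpr ⟨fun i => w (a + i), rfl, rfl, fun i hi => hw (a + i) (by omega)⟩
    -- a walk visiting more than `card α` vertices repeats one, and the loop between can be cut
    obtain ⟨i, j, hij, hwij⟩ := Fintype.exists_ne_map_eq_of_card_lt (fun i : Fin (m + 1) => w i)
      (by simp only [Fintype.card_fin]; omega)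
    wlog hlt : (i : ℕ) < j generalizing i j
    · exact this j i hij.symm hwij.symm (by omega)
    have hwij : w i = w j := hwij
    have hhead := segment 0 i (by omega)
    have htail := segment j (m - j) (by omega)
    rw [Nat.zero_add, hwij] at hhead
    rw [Nat.add_sub_cancel' (by omega)] at htail
    exact ih _ (by omega) (reachIn_add hhead htail)

theorem ReachIn.exists_isChain : ∀ {m : ℕ} {u v : α}, ReachIn Rel m u v →
    ∃ l : List α, l.IsChain Rel ∧ l.head? = some u ∧ l.getLast? = some v
  | 0, u, _, rfl => ⟨[u], List.isChain_singleton u, rfl, rfl⟩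
  | _ + 1, u, _, ⟨_, huw, h⟩ => by
    obtain ⟨_ | ⟨_, l⟩, hl, ⟨⟩, hlast⟩ := h.exists_isChain
    exact ⟨_ :: _ :: l, List.isChain_cons_cons.mpr ⟨huw, hl⟩, rfl, by simpa using hlast⟩

theorem List.IsChain.rel_of_mem_zip_tail : ∀ {l : List α}, l.IsChain Rel →
    ∀ {a b : α}, (a, b) ∈ l.zip l.tail → Rel a b
  | _ :: _ :: _, h, _, _, hab => by
    rw [List.isChain_cons_cons] at h
    rcases List.mem_cons.mp hab with hab | hab
    · obtain ⟨rfl, rfl⟩ := Prod.mk.inj hab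
      exact h.1
    · exact h.2.rel_of_mem_zip_tail hab

end Walks

section Level
variable {α : Type*} {Rel : α → α → Prop} {src v : α}

theorem lvl_le {m : ℕ} (h : ReachIn Rel m src v) : lvl Rel src v ≤ m := sInf_le ⟨m, h, rfl⟩

theorem le_lvl {k : ℕ∞} (h : ∀ m : ℕ, ReachIn Rel m src v → k ≤ m) : k ≤ lvl Rel src v :=
  le_sInf fun _ ⟨m, hm, hk⟩ => hk ▸ h m hm

theorem lvl_self : lvl Rel src src = 0 := nonpos_iff_eq_zero.mp (lvl_le (m := 0) rfl)

theorem exists_reachIn_lvl_eq (h : ∃ m, ReachIn Rel m src v) :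
    ∃ m : ℕ, ReachIn Rel m src v ∧ lvl Rel src v = m :=
  ⟨Nat.find h, Nat.find_spec h,
    (lvl_le (Nat.find_spec h)).antisymm (le_lvl fun _ hm => Nat.cast_le.mpr (Nat.find_min' h hm))⟩

theorem lvl_ne_top_iff : lvl Rel src v ≠ ⊤ ↔ ∃ m, ReachIn Rel m src v := by
  refine ⟨fun h => ?_, fun ⟨m, hm⟩ => ne_top_of_le_ne_top (ENat.natCast_ne_top m) (lvl_le hm)⟩
  by_contra hv
  exact h (top_le_iff.mp (le_lvl fun m hm => (hv ⟨m, hm⟩).elim))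

theorem lvl_le_lvl_add_one {u : α} (h : Rel u v) : lvl Rel src v ≤ lvl Rel src u + 1 := by
  by_cases hu : ∃ m, ReachIn Rel m src u
  · obtain ⟨m, hm, hlvl⟩ := exists_reachIn_lvl_eq hu
    rw [hlvl]
    exact_mod_cast lvl_le (reachIn_succ_right.mpr ⟨u, hm, h⟩)
  · have hu : lvl Rel src u = ⊤ := by simpa using mt lvl_ne_top_iff.mp hu
    simp [hu]

theorem lvl_lt_card [Fintype α] (h : ∃ m, ReachIn Rel m src v) :
    lvl Rel src v < Fintype.card α := by
  obtain ⟨m, hm, hreach⟩ := exists_reachIn_lt_card h.choose_spec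
  exact (lvl_le hreach).trans_lt (Nat.cast_lt.mpr hm)

theorem lvl_le_and_reachIn_levelGraph {Rel' : α → α → Prop}
    (hRel' : ∀ u v, Rel' u v → Rel u v ∨ lvl Rel src u = lvl Rel src v + 1) :
    ∀ {m : ℕ} {v : α}, ReachIn Rel' m src v → lvl Rel src v ≤ m ∧
      (m ≤ lvl Rel src v → ReachIn (fun a b => Rel' a b ∧ Rel a b ∧
        lvl Rel src b = lvl Rel src a + 1) m src v)
  | 0, _, rfl => ⟨lvl_self.le, fun _ => rfl⟩
  | m + 1, v, h => by
    obtain ⟨w, hw, hwv⟩ := reachIn_succ_right.mp h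
    obtain ⟨hlw, hlevel⟩ := lvl_le_and_reachIn_levelGraph hRel' hw
    have hedge : lvl Rel src v ≤ lvl Rel src w + 1 :=
      (hRel' w v hwv).elim lvl_le_lvl_add_one fun h => h ▸ le_add_right le_self_add
    refine ⟨hedge.trans (by push_cast; gcongr), fun hm => ?_⟩
    have hwfin : lvl Rel src w ≠ ⊤ := ne_top_of_le_ne_top (ENat.natCast_ne_top m) hlw
    have hvfin : lvl Rel src v ≠ ⊤ := ne_top_of_le_ne_top (by simpa using hwfin) hedge
    obtain ⟨hlw', hlv⟩ : lvl Rel src w = m ∧ lvl Rel src v = m + 1 := by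
      obtain ⟨n, hn⟩ := ENat.ne_top_iff_exists.mp hwfin
      obtain ⟨k, hk⟩ := ENat.ne_top_iff_exists.mp hvfin
      rw [← hn] at hlw hedge ⊢
      rw [← hk] at hedge hm ⊢
      norm_cast at hlw hedge hm ⊢
      omega
    refine reachIn_succ_right.mpr ⟨w, hlevel hlw'.ge, hwv, ?_, by rw [hlv, hlw']⟩
    refine (hRel' w v hwv).resolve_right fun h => ?_
    rw [hlw', hlv] at h
    norm_cast at h
    omega

end Level

section Network
variable {P R : Type*} [Fintype P] [Fintype R] {E : P → R → Prop} {s : P → ℝ} {d : R → ℝ}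

open Finset

theorem three_le_lvl_res {f : P → R → ℝ} : 3 ≤ lvl (Res E s d f) sVx tVx := by
  refine le_lvl fun m h => ?_
  match m, h with
  | 0, h => exact absurd h (by simp [ReachIn, sVx, tVx])
  | 1, ⟨_, hw, rfl⟩ => exact absurd hw (by simp [Res, sVx, tVx])
  | 2, ⟨w, hw, _, hw', rfl⟩ =>
    rcases w with (_ | _) | (_ | _) <;> simp [Res, sVx, tVx] at hw hw'
  | m + 3, _ => exact_mod_cast Nat.le_add_left 3 m

theorem IsFlow.of_pruned {h f' : P → R → ℝ} (hh : IsFlow E s d h) (hp : Pruned h f') :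
    IsFlow E s d f' := by
  obtain ⟨hnonneg, hrow, hcol, hsupp, -⟩ := hp
  exact ⟨hnonneg, fun p r hne => hh.2.1 p r (hsupp p r hne),
    fun p => hrow p ▸ hh.2.2.1 p, fun r => hcol r ▸ hh.2.2.2 r⟩

theorem IsBlocking.isFlow_add {f g : P → R → ℝ} (hb : IsBlocking E s d f g) :
    IsFlow E s d (fun p r => f p r + g p r) :=
  hb.2.2.2.2.2.2.1

theorem res_of_res_pruned {h f' : P → R → ℝ} (hh : IsFlow E s d h) (hp : Pruned h f')
    {u v : Vtx P R} (hres : Res E s d f' u v) : Res E s d h u v := by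
  obtain ⟨-, hrow, hcol, hsupp, -⟩ := hp
  rcases u with (_ | p) | (r | _) <;> rcases v with (_ | p') | (r' | _) <;>
    simp only [Res] at hres ⊢
  all_goals first
    | exact hres
    | exact hrow _ ▸ hres
    | exact hcol _ ▸ hres
    | exact (hh.1 p' r).lt_of_ne fun e => hsupp p' r hres.ne' e.symm

theorem res_add_or_levelEdge {f g : P → R → ℝ} (hb : IsBlocking E s d f g) {u v : Vtx P R}
    (hres : Res E s d (fun p r => f p r + g p r) u v) :
    Res E s d f u v ∨ LevelEdge E s d f v u := by
  obtain ⟨hpos, hneg, hrow, hcol, hsrc, hsink, -⟩ := hb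
  rcases u with (_ | p) | (r | _) <;> rcases v with (_ | p') | (r' | _) <;>
    simp only [Res, sum_add_distrib] at hres ⊢
  all_goals first
    | exact hres.elim
    | exact Or.inl hres
    | exact Or.inl (by linarith [hrow p'])
    | exact Or.inl (by linarith [hcol r])
    | refine or_iff_not_imp_left.mpr fun hf0 => ?_
      first
        | exact hsrc p (by linarith)
        | exact hpos p' r (by linarith)
        | exact hsink r' (by linarith)

theorem not_res_add_of_saturated {f g : P → R → ℝ} {u v : Vtx P R}
    (hsat : Saturated s d f g u v) : ¬ Res E s d (fun p r => f p r + g p r) u v := by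
  rcases u with (_ | p) | (r | _) <;> rcases v with (_ | p') | (r' | _) <;>
    simp only [Saturated] at hsat <;> simp only [Res, hsat, lt_irrefl, not_false_eq_true]

theorem lvl_res_lt_of_dinitzStep {f f' : P → R → ℝ} (hstep : DinitzStep E s d f f')
    (hreach : ∃ m, ReachIn (Res E s d f) m sVx tVx) :
    lvl (Res E s d f) sVx tVx < lvl (Res E s d f') sVx tVx := by
  obtain ⟨g, hb, hp⟩ := hstep
  have hres : ∀ {u v}, Res E s d f' u v → Res E s d (fun p r => f p r + g p r) u v :=
    res_of_res_pruned hb.isFlow_add hp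
  have hdown : ∀ u v, Res E s d f' u v →
      Res E s d f u v ∨ lvl (Res E s d f) sVx u = lvl (Res E s d f) sVx v + 1 :=
    fun u v h => (res_add_or_levelEdge hb (hres h)).imp_right And.right
  by_contra! hle
  have hreach' : ∃ m, ReachIn (Res E s d f') m sVx tVx :=
    lvl_ne_top_iff.mp (ne_top_of_le_ne_top (lvl_ne_top_iff.mpr hreach) hle)
  obtain ⟨m, hm, hlvl⟩ := exists_reachIn_lvl_eq hreach'
  -- a shortest path of `G(f')` would be a path of `L(f)` avoiding every edge saturated by `g`
  obtain ⟨l, hchain, hhead, hlast⟩ :=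
    ((lvl_le_and_reachIn_levelGraph hdown hm).2 (hlvl ▸ hle)).exists_isChain
  obtain ⟨⟨u, v⟩, huv, hsat⟩ :=
    hb.2.2.2.2.2.2.2 l (hchain.imp fun _ _ h => h.2) hhead hlast
  exact not_res_add_of_saturated hsat (hres (hchain.rel_of_mem_zip_tail huv).1)

/-- The value of a flow, counted across the cut `{s} ∪ A ∪ B`. -/
theorem sum_eq_cut {f : P → R → ℝ} (hE : ∀ p r, f p r ≠ 0 → E p r) {A : Finset P}
    {B : Finset R} (hAB : ∀ p ∈ A, ∀ r, E p r → r ∈ B) :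
    ∑ p, ∑ r, f p r =
      ∑ p ∈ Aᶜ, ∑ r, f p r + ∑ r ∈ B, ∑ p, f p r - ∑ p ∈ Aᶜ, ∑ r ∈ B, f p r := by
  have hrow : ∀ p ∈ A, ∑ r ∈ B, f p r = ∑ r, f p r := fun p hp =>
    sum_subset (subset_univ B) fun r _ hr => by_contra fun hne => hr (hAB p hp r (hE p r hne))
  rw [sum_comm (s := B), ← sum_add_sum_compl A (fun p => ∑ r ∈ B, f p r), sum_congr rfl hrow,
    ← sum_add_sum_compl A (fun p => ∑ r, f p r)]
  ring

theorem sum_le_sum_of_not_reachIn {F f : P → R → ℝ} (hF : IsFlow E s d F)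
    (hun : ¬ ∃ m, ReachIn (Res E s d F) m sVx tVx) (hf : IsFlow E s d f) :
    ∑ p, ∑ r, f p r ≤ ∑ p, ∑ r, F p r := by
  set S : Vtx P R → Prop := fun v => ∃ m, ReachIn (Res E s d F) m sVx v
  have hS : ∀ {u v}, S u → Res E s d F u v → S v := fun ⟨m, hm⟩ h =>
    ⟨m + 1, reachIn_succ_right.mpr ⟨_, hm, h⟩⟩
  set A := univ.filter fun p => S (pVx p)
  set B := univ.filter fun r => S (rVx r)
  have hA : ∀ {p}, p ∈ A ↔ S (pVx p) := by simp [A]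
  have hB : ∀ {r}, r ∈ B ↔ S (rVx r) := by simp [B]
  have hAB : ∀ p ∈ A, ∀ r, E p r → r ∈ B := fun p hp r he => hB.mpr (hS (hA.mp hp) he)
  have hsupply : ∀ p ∈ Aᶜ, ∑ r, F p r = s p := fun p hp =>
    (hF.2.2.1 p).antisymm (not_lt.mp fun hlt => mem_compl.mp hp (hA.mpr (hS ⟨0, rfl⟩ hlt)))
  have hdemand : ∀ r ∈ B, ∑ p, F p r = d r := fun r hr =>
    (hF.2.2.2 r).antisymm (not_lt.mp fun hlt => hun (hS (hB.mp hr) hlt))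
  have hback : ∀ p ∈ Aᶜ, ∑ r ∈ B, F p r = 0 := fun p hp => sum_eq_zero fun r hr =>
    (not_lt.mp fun hlt => mem_compl.mp hp (hA.mpr (hS (hB.mp hr) hlt))).antisymm (hF.1 p r)
  calc ∑ p, ∑ r, f p r
      ≤ ∑ p ∈ Aᶜ, s p + ∑ r ∈ B, d r - 0 := by
        rw [sum_eq_cut hf.2.1 hAB]
        exact sub_le_sub (add_le_add (sum_le_sum fun p _ => hf.2.2.1 p)
          (sum_le_sum fun r _ => hf.2.2.2 r)) (sum_nonneg fun p _ => sum_nonneg fun r _ => hf.1 p r)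
    _ = ∑ p, ∑ r, F p r := by
        rw [sum_eq_cut hF.2.1 hAB, sum_congr rfl hsupply, sum_congr rfl hdemand,
          sum_eq_zero hback]

def IsDinitzRun (E : P → R → Prop) (s : P → ℝ) (d : R → ℝ) (F : ℕ → P → R → ℝ) : Prop :=
  ∀ k, ((∃ m, ReachIn (Res E s d (F k)) m sVx tVx) → DinitzStep E s d (F k) (F (k + 1))) ∧
    ((¬ ∃ m, ReachIn (Res E s d (F k)) m sVx tVx) → F (k + 1) = F k)

theorem IsDinitzRun.isFlow {F : ℕ → P → R → ℝ} (hF : IsDinitzRun E s d F)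
    (hF0 : IsFlow E s d (F 0)) : ∀ k, IsFlow E s d (F k)
  | 0 => hF0
  | k + 1 => by
    by_cases hreach : ∃ m, ReachIn (Res E s d (F k)) m sVx tVx
    · obtain ⟨g, hb, hp⟩ := (hF k).1 hreach
      exact hb.isFlow_add.of_pruned hp
    · exact (hF k).2 hreach ▸ hF.isFlow hF0 k

theorem IsDinitzRun.add_three_le_lvl {F : ℕ → P → R → ℝ} (hF : IsDinitzRun E s d F) :
    ∀ k, (∃ m, ReachIn (Res E s d (F k)) m sVx tVx) →
      ((k + 3 : ℕ) : ℕ∞) ≤ lvl (Res E s d (F k)) sVx tVx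
  | 0, _ => three_le_lvl_res
  | k + 1, hreach => by
    by_cases hreach' : ∃ m, ReachIn (Res E s d (F k)) m sVx tVx
    · have hlt := lvl_res_lt_of_dinitzStep ((hF k).1 hreach') hreach'
      exact_mod_cast Order.add_one_le_of_lt ((hF.add_three_le_lvl k hreach').trans_lt hlt)
    · exact absurd (by rwa [(hF k).2 hreach'] at hreach) hreach'

end Network

theorem stmt12_general {P R : Type*} [Fintype P] [Fintype R]
    (E : P → R → Prop) (s : P → ℝ) (d : R → ℝ)
    (F : ℕ → P → R → ℝ)
    (hF0 : IsFlow E s d (F 0))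
    (hstep : ∀ k,
      ((∃ m, ReachIn (Res E s d (F k)) m sVx tVx) →
          DinitzStep E s d (F k) (F (k + 1))) ∧
      ((¬ ∃ m, ReachIn (Res E s d (F k)) m sVx tVx) → F (k + 1) = F k))
    :
    -- after `n = |P| + |R|` augmentations:
    (¬ ∃ m, ReachIn (Res E s d (F (Fintype.card P + Fintype.card R))) m sVx tVx) ∧
    (∀ f, IsFlow E s d f →
      ∑ p, ∑ r, f p r ≤ ∑ p, ∑ r, F (Fintype.card P + Fintype.card R) p r) ∧
    (∀ k, (∃ m, ReachIn (Res E s d (F k)) m sVx tVx) →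
      lvl (Res E s d (F k)) sVx tVx < lvl (Res E s d (F (k + 1))) sVx tVx) := by
  have hrun : IsDinitzRun E s d F := hstep
  have hunreach :
      ¬ ∃ m, ReachIn (Res E s d (F (Fintype.card P + Fintype.card R))) m sVx tVx := by
    intro hreach
    -- the level of `t` grows past `n + 2 = |Vtx P R|`
    have hlow := hrun.add_three_le_lvl _ hreach
    have hhigh := lvl_lt_card hreach
    simp only [Fintype.card_sum, Fintype.card_unit] at hhigh
    have := Nat.cast_lt.mp (hlow.trans_lt hhigh)
    omega
  exact ⟨hunreach, fun f hf => sum_le_sum_of_not_reachIn (hrun.isFlow hF0 _) hunreach hf,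
    fun k hk => lvl_res_lt_of_dinitzStep ((hstep k).1 hk) hk⟩

/-- In Dinitz' algorithm with pruning, the `s`-`t` distance in the residual graph strictly
increases with every augmentation; since the level of `t` is always odd, at least `3` and
at most `2n+1` with `n = |P| + |R|`, after at most `n` augmentations (performed while `t`
is reachable from `s` in the residual graph) the sink is unreachable and the current flow
is a maximum flow. -/
theorem stmt12 {P R : Type*} [Fintype P] [Fintype R]
    (E : P → R → Prop) (s : P → ℝ) (d : R → ℝ)
    (F : ℕ → P → R → ℝ)
    (hF0 : IsFlow E s d (F 0))
    (hzero : ∀ p r, F 0 p r = 0)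
    (hstep : ∀ k,
      ((∃ m, ReachIn (Res E s d (F k)) m sVx tVx) →
          DinitzStep E s d (F k) (F (k + 1))) ∧
      ((¬ ∃ m, ReachIn (Res E s d (F k)) m sVx tVx) → F (k + 1) = F k))
    :
    -- after `n = |P| + |R|` augmentations:
    (¬ ∃ m, ReachIn (Res E s d (F (Fintype.card P + Fintype.card R))) m sVx tVx) ∧
    (∀ f, IsFlow E s d f →
      ∑ p, ∑ r, f p r ≤ ∑ p, ∑ r, F (Fintype.card P + Fintype.card R) p r) ∧
    (∀ k, (∃ m, ReachIn (Res E s d (F k)) m sVx tVx) →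
      lvl (Res E s d (F k)) sVx tVx < lvl (Res E s d (F (k + 1))) sVx tVx) :=
  stmt12_general E s d F hF0 hstep
end

section
/- Let P and Q be finite sets of points on the real line with supplies s_p > 0 (p ∈ P) and demands d_q > 0 (q ∈ Q), satisfying Σ_{p∈P} s_p = Σ_{q∈Q} d_q. Fix λ ≥ 0 and let G_λ(P,Q) be the bipartite graph connecting p to q whenever |p − q| ≤ λ. If G_λ(P,Q) admits any satisfying matching (one of value equal to the total supply), then the greedy matching—processing points of P and Q in increasing order of coordinate and assigning each unit of supply to the leftmost unsatisfied demand within distance λ—also produces a satisfying matching. -/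
/-- The greedy matching on the line: supplies `Ps` and demands `Qs` are lists of
(coordinate, amount) pairs sorted by increasing coordinate. Processing points in
increasing order, each unit of supply is assigned to the leftmost unsatisfied demand
within distance `lam`; demands too far to the left are skipped (no later supply can reach
them), suppliers that cannot reach the current leftmost demand are skipped. Returns the
total matched value. -/
noncomputable def greedy (lam : ℝ) : List (ℝ × ℝ) → List (ℝ × ℝ) → ℝ
  | [], _ => 0
  | _ :: _, [] => 0
  | (p, sp) :: Ps, (q, dq) :: Qs =>
    if q < p - lam then greedy lam ((p, sp) :: Ps) Qs
    else if p + lam < q then greedy lam Ps ((q, dq) :: Qs)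
    else if sp ≤ dq then sp + greedy lam Ps ((q, dq - sp) :: Qs)
    else dq + greedy lam ((p, sp - dq) :: Ps) Qs
  termination_by Ps Qs => (Ps.length, Qs.length)

/-! Induct along the recursion of `greedy`, carrying a satisfying matching of the remaining
instance. Let `p` and `q` be the leftmost supply and demand. If `q < p - λ`, no supply reaches
`q`, so its demand is `0` in any satisfying matching (symmetrically for `p + λ < q`). Otherwise
the matching is rerouted so that `p` sends `min(s_p, d_q)` to `q`: if `p` serves some `q'` while
some `p'` serves `q`, then `p ≤ p'` and `q ≤ q'` force `|p' - q'| ≤ λ`, so `p'` can take over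
that flow. What remains after this exchange is a satisfying matching of the instance on which
`greedy` recurses. -/

open Finset

theorem List.sum_range_length_getD {α M : Type*} [AddCommMonoid M] (l : List α) (f : α → M)
    (d : α) : ∑ i ∈ Finset.range l.length, f (l.getD i d) = (l.map f).sum := by
  induction l with
  | nil => simp
  | cons x l ih => simp [Finset.sum_range_succ', ← ih, add_comm]

theorem List.Pairwise.le_getD_of_cons {α β : Type*} [Preorder β] {f : α → β} {x d : α}
    {l : List α} (h : (x :: l).Pairwise (fun a b => f a ≤ f b)) {i : ℕ}
    (hi : i < (x :: l).length) : f x ≤ f ((x :: l).getD i d) := by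
  rcases i with _ | i
  · exact le_rfl
  · simp only [List.length_cons, Nat.add_lt_add_iff_right] at hi
    rw [List.getD_cons_succ, List.getD_eq_getElem _ _ hi]
    exact List.rel_of_pairwise_cons h (List.getElem_mem hi)

theorem abs_sub_le_of_uncross {p p' q q' lam : ℝ} (hp : p ≤ p') (hq : q ≤ q')
    (h₁ : |p' - q| ≤ lam) (h₂ : |p - q'| ≤ lam) : |p' - q'| ≤ lam := by
  rw [abs_le] at *
  constructor <;> linarith [h₁.1, h₁.2, h₂.1, h₂.2]

structure IsSatisfyingMatching (lam : ℝ) (Ps Qs : List (ℝ × ℝ)) (a : ℕ → ℕ → ℝ) : Prop where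
  nonneg : ∀ i j, 0 ≤ a i j
  dist_le : ∀ i < Ps.length, ∀ j < Qs.length, a i j ≠ 0 →
    |(Ps.getD i 0).1 - (Qs.getD j 0).1| ≤ lam
  sum_row : ∀ i < Ps.length, ∑ j ∈ range Qs.length, a i j = (Ps.getD i 0).2
  sum_col : ∀ j < Qs.length, ∑ i ∈ range Ps.length, a i j = (Qs.getD j 0).2

namespace IsSatisfyingMatching

variable {lam : ℝ} {Ps Qs : List (ℝ × ℝ)} {a : ℕ → ℕ → ℝ}

theorem transpose (h : IsSatisfyingMatching lam Ps Qs a) :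
    IsSatisfyingMatching lam Qs Ps (fun j i => a i j) where
  nonneg j i := h.nonneg i j
  dist_le j hj i hi hne := abs_sub_comm (Ps.getD i 0).1 _ ▸ h.dist_le i hi j hj hne
  sum_row := h.sum_col
  sum_col := h.sum_row

theorem sum_map_snd_eq (h : IsSatisfyingMatching lam Ps Qs a) :
    (Ps.map Prod.snd).sum = (Qs.map Prod.snd).sum := by
  rw [← Ps.sum_range_length_getD Prod.snd 0, ← Qs.sum_range_length_getD Prod.snd 0]
  calc ∑ i ∈ range Ps.length, (Ps.getD i 0).2
      = ∑ i ∈ range Ps.length, ∑ j ∈ range Qs.length, a i j :=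
        sum_congr rfl fun i hi => (h.sum_row i (mem_range.1 hi)).symm
    _ = ∑ j ∈ range Qs.length, ∑ i ∈ range Ps.length, a i j := sum_comm
    _ = ∑ j ∈ range Qs.length, (Qs.getD j 0).2 :=
        sum_congr rfl fun j hj => h.sum_col j (mem_range.1 hj)

theorem drop_far_demand {x : ℝ × ℝ} {X Q : List (ℝ × ℝ)} {q dq : ℝ}
    (hX : (x :: X).Pairwise (fun a b => a.1 ≤ b.1)) (hfar : q < x.1 - lam)
    (h : IsSatisfyingMatching lam (x :: X) ((q, dq) :: Q) a) :
    dq = 0 ∧ IsSatisfyingMatching lam (x :: X) Q (fun i j => a i (j + 1)) := by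
  have hcol : ∀ i < (x :: X).length, a i 0 = 0 := by
    intro i hi
    by_contra hne
    have hdist := (abs_le.1 (h.dist_le i hi 0 (by simp) hne)).2
    have hx := hX.le_getD_of_cons (d := 0) hi
    simp only [List.getD_cons_zero] at hdist
    linarith
  refine ⟨?_, ⟨fun i j => h.nonneg i (j + 1), fun i hi j hj => ?_, fun i hi => ?_,
    fun j hj => ?_⟩⟩
  · have hdq := h.sum_col 0 (by simp)
    rw [sum_eq_zero fun i hi => hcol i (mem_range.1 hi)] at hdq
    simpa using hdq.symm
  · simpa using h.dist_le i hi (j + 1) (by simpa using hj)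
  · simpa [Finset.sum_range_succ', hcol i hi] using h.sum_row i hi
  · simpa using h.sum_col (j + 1) (by simpa using hj)

/-- Supplier `0` is made to send its whole supply `s` to demand `0`; the flow it used to send
elsewhere is taken over by the suppliers `i + 1`, in proportion to what they sent to demand `0`. -/
noncomputable def reroute (a : ℕ → ℕ → ℝ) (c s : ℝ) (i j : ℕ) : ℝ :=
  a (i + 1) j + a (i + 1) 0 / c * (a 0 j - if j = 0 then s else 0)

theorem exchange {p sp q dq : ℝ} {P Q : List (ℝ × ℝ)}
    (hP : ((p, sp) :: P).Pairwise (fun a b => a.1 ≤ b.1))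
    (hQ : ((q, dq) :: Q).Pairwise (fun a b => a.1 ≤ b.1)) (hsd : sp ≤ dq)
    (h : IsSatisfyingMatching lam ((p, sp) :: P) ((q, dq) :: Q) a) :
    IsSatisfyingMatching lam P ((q, dq - sp) :: Q)
      (reroute a (∑ k ∈ range P.length, a (k + 1) 0) sp) := by
  set c := ∑ k ∈ range P.length, a (k + 1) 0
  set r := ∑ j ∈ range Q.length, a 0 (j + 1)
  have hsp : a 0 0 + r = sp := by
    simpa [Finset.sum_range_succ', add_comm] using h.sum_row 0 (by simp)
  have hdq : a 0 0 + c = dq := by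
    simpa [Finset.sum_range_succ', add_comm] using h.sum_col 0 (by simp)
  have hr : 0 ≤ r := sum_nonneg fun j _ => h.nonneg 0 (j + 1)
  have hrc : r ≤ c := by linarith
  have hcancel : ∀ j < Q.length + 1, c / c * (a 0 j - if j = 0 then sp else 0) =
      a 0 j - if j = 0 then sp else 0 := by
    intro j hj
    rcases eq_or_ne c 0 with hc | hc
    · have hr0 : r = 0 := by linarith
      rcases j with _ | j
      · simp only [hc, div_zero, if_true, zero_mul]
        linarith
      · have := (sum_eq_zero_iff_of_nonneg fun k _ => h.nonneg 0 (k + 1)).1 hr0 j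
          (by simpa using hj)
        simp [hc, this]
    · rw [div_self hc, one_mul]
  refine ⟨fun i j => ?_, fun i hi j hj hne => ?_, fun i hi => ?_, fun j hj => ?_⟩
  · have hw : a (i + 1) 0 / c * r ≤ a (i + 1) 0 := by
      rw [div_mul_eq_mul_div, mul_div_assoc]
      exact mul_le_of_le_one_right (h.nonneg _ _) (div_le_one_of_le₀ hrc (hr.trans hrc))
    rcases j with _ | j
    · simp only [reroute, if_true, ← hsp]
      linarith
    · simp only [reroute, Nat.add_one_ne_zero, if_false, sub_zero]
      exact add_nonneg (h.nonneg _ _) (mul_nonneg (div_nonneg (h.nonneg _ _)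
        (hr.trans hrc)) (h.nonneg _ _))
  · have hi' : i + 1 < ((p, sp) :: P).length := by simpa using hi
    have hj' : j < ((q, dq) :: Q).length := by simpa using hj
    have hfst : (((q, dq - sp) :: Q).getD j 0).1 = (((q, dq) :: Q).getD j 0).1 := by
      rcases j with _ | j <;> simp
    rw [hfst, ← List.getD_cons_succ (x := (p, sp))]
    by_cases hij : a (i + 1) j = 0
    · simp only [reroute, hij, zero_add, ne_eq, mul_eq_zero, div_eq_zero_iff, not_or] at hne
      have hi0 := h.dist_le (i + 1) hi' 0 (by simp) hne.1.1
      rcases j with _ | j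
      · exact hi0
      · have h0j := h.dist_le 0 (by simp) (j + 1) hj' (by simpa using hne.2)
        exact abs_sub_le_of_uncross (hP.le_getD_of_cons hi') (hQ.le_getD_of_cons hj') hi0 h0j
    · exact h.dist_le (i + 1) hi' j hj' hij
  · have hv : ∑ j ∈ range (Q.length + 1), (a 0 j - if j = 0 then sp else 0) = 0 := by
      have := h.sum_row 0 (by simp)
      simp_all
    have := h.sum_row (i + 1) (by simpa using hi)
    simp only [List.length_cons, List.getD_cons_succ] at this ⊢
    simp only [reroute, sum_add_distrib, ← mul_sum, hv, mul_zero, add_zero, this]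
  · have hcol := h.sum_col j hj
    simp only [List.length_cons, Finset.sum_range_succ'] at hcol
    have hw : ∑ i ∈ range P.length, a (i + 1) 0 / c = c / c := (sum_div ..).symm
    simp only [reroute, sum_add_distrib, ← sum_mul, hw, hcancel j (by simpa using hj)]
    rcases j with _ | j
    · simp only [List.getD_cons_zero, if_true] at hcol ⊢
      linarith
    · simp only [List.getD_cons_succ, Nat.add_one_ne_zero, if_false, sub_zero] at hcol ⊢
      linarith

end IsSatisfyingMatching

theorem List.Pairwise.replace_head_snd {x s t : ℝ} {l : List (ℝ × ℝ)}
    (h : ((x, s) :: l).Pairwise (fun a b => a.1 ≤ b.1)) :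
    ((x, t) :: l).Pairwise (fun a b => a.1 ≤ b.1) :=
  List.pairwise_cons.2 ⟨fun _ hb => List.rel_of_pairwise_cons h hb, h.of_cons⟩

theorem greedy_eq_sum_of_isSatisfyingMatching {lam : ℝ} {Ps Qs : List (ℝ × ℝ)}
    {a : ℕ → ℕ → ℝ} (hP : Ps.Pairwise (fun a b => a.1 ≤ b.1))
    (hQ : Qs.Pairwise (fun a b => a.1 ≤ b.1)) (h : IsSatisfyingMatching lam Ps Qs a) :
    greedy lam Ps Qs = (Ps.map Prod.snd).sum := by
  induction Ps, Qs using greedy.induct lam generalizing a with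
  | case1 Qs => simp [greedy]
  | case2 x X => simpa [greedy] using h.sum_map_snd_eq.symm
  | case3 p sp P q dq Q hfar ih =>
    obtain ⟨-, h'⟩ := h.drop_far_demand hP hfar
    rw [greedy, if_pos hfar, ih hP hQ.of_cons h']
  | case4 p sp P q dq Q hnear hfar ih =>
    obtain ⟨hsp, h'⟩ := h.transpose.drop_far_demand hQ (by linarith)
    rw [greedy, if_neg hnear, if_pos hfar, ih hP.of_cons hQ h'.transpose]
    simp [hsp]
  | case5 p sp P q dq Q hnear hfar hsd ih =>
    rw [greedy, if_neg hnear, if_neg hfar, if_pos hsd,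
      ih hP.of_cons hQ.replace_head_snd (h.exchange hP hQ hsd)]
    simp
  | case6 p sp P q dq Q hnear hfar hsd ih =>
    have h' := (h.transpose.exchange hQ hP (le_of_not_ge hsd)).transpose
    rw [greedy, if_neg hnear, if_neg hfar, if_neg hsd, ih hP.replace_head_snd hQ.of_cons h']
    simp only [List.map_cons, List.sum_cons]
    ring

theorem isSatisfyingMatching_of_fin {lam : ℝ} {Ps Qs : List (ℝ × ℝ)}
    {a : Fin Ps.length → Fin Qs.length → ℝ} (hnonneg : ∀ i j, 0 ≤ a i j)
    (hdist : ∀ i j, a i j ≠ 0 → |(Ps.get i).1 - (Qs.get j).1| ≤ lam)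
    (hrow : ∀ i, ∑ j, a i j = (Ps.get i).2) (hcol : ∀ j, ∑ i, a i j = (Qs.get j).2) :
    IsSatisfyingMatching lam Ps Qs
      (fun i j => if h : i < Ps.length ∧ j < Qs.length then a ⟨i, h.1⟩ ⟨j, h.2⟩ else 0) where
  nonneg i j := by
    split_ifs
    exacts [hnonneg _ _, le_rfl]
  dist_le i hi j hj hne := by
    rw [dif_pos ⟨hi, hj⟩] at hne
    rw [List.getD_eq_getElem _ _ hi, List.getD_eq_getElem _ _ hj]
    exact hdist _ _ hne
  sum_row i hi := by
    rw [← Fin.sum_univ_eq_sum_range, List.getD_eq_getElem _ _ hi]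
    simpa [hi] using hrow ⟨i, hi⟩
  sum_col j hj := by
    rw [← Fin.sum_univ_eq_sum_range, List.getD_eq_getElem _ _ hj]
    simpa [hj] using hcol ⟨j, hj⟩

theorem stmt13_general (lam : ℝ)
    (Ps Qs : List (ℝ × ℝ))
    (hPsort : Ps.Pairwise (fun a b => a.1 ≤ b.1))
    (hQsort : Qs.Pairwise (fun a b => a.1 ≤ b.1))
    (htot : (Ps.map Prod.snd).sum = (Qs.map Prod.snd).sum)
    (hsat : ∃ a : Fin Ps.length → Fin Qs.length → ℝ,
      (∀ i j, 0 ≤ a i j) ∧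
      (∀ i j, a i j ≠ 0 → |(Ps.get i).1 - (Qs.get j).1| ≤ lam) ∧
      (∀ i, ∑ j, a i j ≤ (Ps.get i).2) ∧
      (∀ j, ∑ i, a i j ≤ (Qs.get j).2) ∧
      (∑ i, ∑ j, a i j = (Ps.map Prod.snd).sum)) :
    greedy lam Ps Qs = (Ps.map Prod.snd).sum := by
  obtain ⟨a, hnonneg, hdist, hrow, hcol, hvalue⟩ := hsat
  have hrow_eq := (sum_eq_sum_iff_of_le (s := univ) fun i _ => hrow i).1 (by simpa using hvalue)
  have hcol_eq := (sum_eq_sum_iff_of_le (s := univ) fun j _ => hcol j).1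
    (by simpa [sum_comm (γ := Fin Qs.length), htot] using hvalue)
  exact greedy_eq_sum_of_isSatisfyingMatching hPsort hQsort <| isSatisfyingMatching_of_fin
    hnonneg hdist (fun i => hrow_eq i (mem_univ i)) (fun j => hcol_eq j (mem_univ j))

/-- Points on the line with positive supplies and demands of equal total, sorted by
coordinate: if the graph `G_λ(P,Q)` (connecting supply points to demand points at
distance at most `λ`) admits any satisfying matching, then the greedy matching is also
satisfying, i.e. its value is the total supply. -/
theorem stmt13 (lam : ℝ) (hlam : 0 ≤ lam)
    (Ps Qs : List (ℝ × ℝ))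
    (hPsort : Ps.Pairwise (fun a b => a.1 ≤ b.1))
    (hQsort : Qs.Pairwise (fun a b => a.1 ≤ b.1))
    (hPpos : ∀ x ∈ Ps, 0 < x.2) (hQpos : ∀ x ∈ Qs, 0 < x.2)
    (htot : (Ps.map Prod.snd).sum = (Qs.map Prod.snd).sum)
    (hsat : ∃ a : Fin Ps.length → Fin Qs.length → ℝ,
      (∀ i j, 0 ≤ a i j) ∧
      (∀ i j, a i j ≠ 0 → |(Ps.get i).1 - (Qs.get j).1| ≤ lam) ∧
      (∀ i, ∑ j, a i j ≤ (Ps.get i).2) ∧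
      (∀ j, ∑ i, a i j ≤ (Qs.get j).2) ∧
      (∑ i, ∑ j, a i j = (Ps.map Prod.snd).sum)) :
    greedy lam Ps Qs = (Ps.map Prod.snd).sum :=
  stmt13_general lam Ps Qs hPsort hQsort htot hsat
end

section
/- Let X and Y be finite multisets of points in ℝ² strictly above the diagonal Δ = {(x,x)}. Let X'₀ and Y'₀ be the orthogonal projections of X and Y onto Δ, and set P = X ⊔ Y'₀ and Q = Y ⊔ X'₀, so |P| = |Q| = |X| + |Y|. For λ ≥ 0 let G_λ(X,Y) be the bipartite graph on P ⊔ Q whose edges are all pairs (p,q) with p ∈ Y'₀ and q ∈ X'₀, together with all pairs (p,q) with (p ∈ X or q ∈ Y) and ‖p − q‖∞ ≤ λ. Then the function λ ↦ [G_λ(X,Y) has a perfect matching] is monotone (feasible for all λ above some threshold), and the minimum feasible λ equals the bottleneck distance W∞(X,Y) between the persistence diagrams determined by X and Y. -/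
/-!
A perfect matching of `G_λ(X,Y)` becomes a bijection of diagrams once the projections `Y'₀` and
`X'₀` are absorbed into the diagonal, which carries every point with countably infinite
multiplicity. Conversely, a bijection of diagrams restricts to a perfect matching of `G_λ(X,Y)`
whose edges are no longer than the pairs they come from, since `projΔ p` is the diagonal point
closest to `p` in the `L∞`-distance. Feasibility of `λ` thus only depends on the bottleneck
costs of the finitely many matchings, so the least feasible `λ` is the least cost, and it
equals `W∞(X,Y)`.
-/

open scoped ENNReal

/-- Orthogonal projection of a planar point onto the diagonal `Δ = {(x,x)}`. -/
noncomputable def projΔ (p : ℝ × ℝ) : ℝ × ℝ := ((p.1 + p.2) / 2, (p.1 + p.2) / 2)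

/-- The `L∞`-distance in the plane. -/
noncomputable def dinf (p q : ℝ × ℝ) : ℝ := max |p.1 - q.1| |p.2 - q.2|

variable {m k : ℕ}

/-- Positions of the points of `P = X ⊔ Y'₀` (the off-diagonal points of `X` together
with the projections onto the diagonal of the off-diagonal points of `Y`). -/
noncomputable def posP (X : Fin m → ℝ × ℝ) (Y : Fin k → ℝ × ℝ) : Fin m ⊕ Fin k → ℝ × ℝ
  | Sum.inl i => X i
  | Sum.inr j => projΔ (Y j)

/-- Positions of the points of `Q = Y ⊔ X'₀`. -/
noncomputable def posQ (X : Fin m → ℝ × ℝ) (Y : Fin k → ℝ × ℝ) : Fin k ⊕ Fin m → ℝ × ℝ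
  | Sum.inl j => Y j
  | Sum.inr i => projΔ (X i)

/-- The bipartite graph `G_λ(X,Y)` on `P ⊔ Q` has all edges between `Y'₀` and `X'₀`,
together with all pairs `(p,q)` with `p ∈ X` or `q ∈ Y` at `L∞`-distance at most `λ`.
`HasPMpers X Y lam` states that it has a perfect matching. -/
noncomputable def HasPMpers (X : Fin m → ℝ × ℝ) (Y : Fin k → ℝ × ℝ) (lam : ℝ) : Prop :=
  ∃ φ : (Fin m ⊕ Fin k) ≃ (Fin k ⊕ Fin m),
    ∀ a, (a.isRight ∧ (φ a).isRight) ∨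
      ((a.isLeft ∨ (φ a).isLeft) ∧ dinf (posP X Y a) (posQ X Y (φ a)) ≤ lam)

/-- The persistence diagram determined by the off-diagonal multiset `X`: the points of
`X` together with every diagonal point, each with countably infinite multiplicity. -/
noncomputable def dgmPos (X : Fin m → ℝ × ℝ) : Fin m ⊕ (ℝ × ℕ) → ℝ × ℝ
  | Sum.inl i => X i
  | Sum.inr (x, _) => (x, x)

/-- The bottleneck distance `W∞(X,Y)` between the persistence diagrams determined by the
off-diagonal multisets `X` and `Y`: the infimum over all bijections `φ` of the diagrams
of `sup_p ‖p − φ(p)‖∞`. -/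
noncomputable def Winf (X : Fin m → ℝ × ℝ) (Y : Fin k → ℝ × ℝ) : ℝ≥0∞ :=
  ⨅ φ : (Fin m ⊕ (ℝ × ℕ)) ≃ (Fin k ⊕ (ℝ × ℕ)),
    ⨆ a, ENNReal.ofReal (dinf (dgmPos X a) (dgmPos Y (φ a)))

open scoped NNReal

lemma dinf_comm (p q : ℝ × ℝ) : dinf p q = dinf q p := by
  simp only [dinf, abs_sub_comm]

lemma dinf_self (p : ℝ × ℝ) : dinf p p = 0 := by
  simp [dinf]

lemma dinf_projΔ_le (p : ℝ × ℝ) (x : ℝ) : dinf p (projΔ p) ≤ dinf p (x, x) := by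
  have hproj : dinf p (projΔ p) = |p.1 - p.2| / 2 := by
    rw [dinf, projΔ, show p.1 - (p.1 + p.2) / 2 = (p.1 - p.2) / 2 by ring,
      show p.2 - (p.1 + p.2) / 2 = -((p.1 - p.2) / 2) by ring, abs_neg, max_self, abs_div,
      abs_two]
  have htri : |p.1 - p.2| ≤ |p.1 - x| + |p.2 - x| := by
    simpa only [abs_sub_comm x] using abs_sub_le p.1 x p.2
  rw [hproj, dinf]
  linarith [le_max_left |p.1 - x| |p.2 - x|, le_max_right |p.1 - x| |p.2 - x|]

lemma hasPMpers_mono (X : Fin m → ℝ × ℝ) (Y : Fin k → ℝ × ℝ) {lam lam' : ℝ} (hle : lam ≤ lam')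
    (h : HasPMpers X Y lam) : HasPMpers X Y lam' := by
  obtain ⟨φ, hφ⟩ := h
  exact ⟨φ, fun a => (hφ a).imp_right fun h => ⟨h.1, h.2.trans hle⟩⟩

section MatchingCost

variable (X : Fin m → ℝ × ℝ) (Y : Fin k → ℝ × ℝ)

noncomputable def edgeWeight (a : Fin m ⊕ Fin k) (b : Fin k ⊕ Fin m) : ℝ≥0 :=
  if a.isRight ∧ b.isRight then 0 else (dinf (posP X Y a) (posQ X Y b)).toNNReal

noncomputable def matchingCost (φ : (Fin m ⊕ Fin k) ≃ (Fin k ⊕ Fin m)) : ℝ≥0 :=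
  Finset.univ.sup fun a => edgeWeight X Y a (φ a)

lemma isEdge_iff_edgeWeight_le {lam : ℝ} (hlam : 0 ≤ lam) (a : Fin m ⊕ Fin k)
    (b : Fin k ⊕ Fin m) :
    ((a.isRight ∧ b.isRight) ∨
      ((a.isLeft ∨ b.isLeft) ∧ dinf (posP X Y a) (posQ X Y b) ≤ lam)) ↔
      edgeWeight X Y a b ≤ lam.toNNReal := by
  rcases a with i | j <;> rcases b with j' | i' <;>
    simp [edgeWeight, Real.toNNReal_le_toNNReal_iff hlam]

lemma hasPMpers_iff_exists_matchingCost_le {lam : ℝ} (hlam : 0 ≤ lam) :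
    HasPMpers X Y lam ↔ ∃ φ, matchingCost X Y φ ≤ lam.toNNReal := by
  simp only [HasPMpers, matchingCost, Finset.sup_le_iff, Finset.mem_univ, true_imp_iff,
    isEdge_iff_edgeWeight_le X Y hlam]

lemma exists_isLeast_hasPMpers : ∃ lam, IsLeast {lam : ℝ | 0 ≤ lam ∧ HasPMpers X Y lam} lam := by
  have : Nonempty ((Fin m ⊕ Fin k) ≃ (Fin k ⊕ Fin m)) := ⟨Equiv.sumComm _ _⟩
  obtain ⟨φ, hφ⟩ := Finite.exists_min (matchingCost X Y)
  refine ⟨matchingCost X Y φ, ⟨NNReal.coe_nonneg _, ?_⟩, fun μ ⟨hμ, hPM⟩ => ?_⟩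
  · exact (hasPMpers_iff_exists_matchingCost_le X Y (NNReal.coe_nonneg _)).2
      ⟨φ, by rw [Real.toNNReal_coe]⟩
  · obtain ⟨ψ, hψ⟩ := (hasPMpers_iff_exists_matchingCost_le X Y hμ).1 hPM
    exact (Real.le_toNNReal_iff_coe_le hμ).1 ((hφ ψ).trans hψ)

end MatchingCost

/-- Every fibre over `x` on either side is countably infinite. -/
lemma exists_sum_prod_nat_equiv {α : Type*} [Countable α] (u : α → ℝ) :
    ∃ e : α ⊕ ℝ × ℕ ≃ ℝ × ℕ, ∀ w, (e w).1 = Sum.elim u Prod.fst w := by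
  have fibre (x : ℝ) : {q : ℝ × ℕ // q.1 = x} ≃ ℕ :=
    ⟨fun q => q.1.2, fun n => ⟨(x, n), rfl⟩, by rintro ⟨⟨_, _⟩, rfl⟩; rfl, fun _ => rfl⟩
  refine ⟨Equiv.ofFiberEquiv fun x => ?_, Equiv.ofFiberEquiv_map _⟩
  exact Equiv.subtypeSum.trans <| ((Equiv.refl _).sumCongr (fibre x)).trans <|
    nonempty_equiv_of_countable.some.trans (fibre x).symm

lemma exists_equiv_dgmPos {α : Type*} [Countable α] (X : Fin m → ℝ × ℝ) (u : α → ℝ) :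
    ∃ e : (Fin m ⊕ α) ⊕ ℝ × ℕ ≃ Fin m ⊕ ℝ × ℕ, ∀ w, dgmPos X (e w) =
      Sum.elim (Sum.elim X fun a => (u a, u a)) (fun z => (z.1, z.1)) w := by
  obtain ⟨e, he⟩ := exists_sum_prod_nat_equiv u
  refine ⟨(Equiv.sumAssoc _ _ _).trans ((Equiv.refl _).sumCongr e), ?_⟩
  rintro ((i | a) | z) <;> simp [he, dgmPos]

lemma Winf_le_of_equiv {α β : Type*} [Countable α] [Countable β] (X : Fin m → ℝ × ℝ)
    (Y : Fin k → ℝ × ℝ) (u : α → ℝ) (v : β → ℝ) (φ : Fin m ⊕ α ≃ Fin k ⊕ β) {lam : ℝ}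
    (hlam : 0 ≤ lam)
    (hφ : ∀ a, dinf (Sum.elim X (fun a => (u a, u a)) a)
      (Sum.elim Y (fun b => (v b, v b)) (φ a)) ≤ lam) :
    Winf X Y ≤ ENNReal.ofReal lam := by
  obtain ⟨eX, heX⟩ := exists_equiv_dgmPos X u
  obtain ⟨eY, heY⟩ := exists_equiv_dgmPos Y v
  refine iInf_le_of_le (eX.symm.trans ((φ.sumCongr (Equiv.refl _)).trans eY)) <|
    iSup_le fun z => ENNReal.ofReal_le_ofReal ?_
  obtain ⟨w, rfl⟩ := eX.surjective z
  rcases w with a | z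
  · simpa [heX, heY] using hφ a
  · simpa [heX, heY, dinf_self] using hlam

/-- A `Y'₀`-point matched to an `X'₀`-point is moved onto that point of the diagonal, so that
the pair costs nothing; every other diagonal point of both diagrams is matched to itself. -/
lemma Winf_le_of_hasPMpers (X : Fin m → ℝ × ℝ) (Y : Fin k → ℝ × ℝ) {lam : ℝ} (hlam : 0 ≤ lam)
    (h : HasPMpers X Y lam) : Winf X Y ≤ ENNReal.ofReal lam := by
  obtain ⟨φ, hφ⟩ := h
  refine Winf_le_of_equiv X Y (fun j => (projΔ (Sum.elim (fun _ => Y j) X (φ (.inr j)))).1)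
    (fun i => (projΔ (X i)).1) φ hlam fun a => ?_
  have ha := hφ a
  rcases a with i | j <;> rcases hφa : φ _ with j' | i' <;>
    simp_all [posP, posQ, projΔ, dinf_self]

section MatchingOfEquiv

variable {A B D : Type*}

def matchingFun (Φ : A ⊕ D ≃ B ⊕ D) : A ⊕ B → B ⊕ A
  | .inl a => (Φ (.inl a)).elim .inl fun _ => .inr a
  | .inr b => (Φ.symm (.inl b)).elim .inr fun _ => .inl b

lemma matchingFun_symm_matchingFun (Φ : A ⊕ D ≃ B ⊕ D) (x : A ⊕ B) :
    matchingFun Φ.symm (matchingFun Φ x) = x := by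
  rcases x with a | b
  · rcases h : Φ (.inl a) with b | d <;> simp [matchingFun, h, Φ.symm_apply_eq.2 h.symm]
  · rcases h : Φ.symm (.inl b) with a | d <;> simp [matchingFun, h, Φ.eq_symm_apply.1 h.symm]

def matchingOfEquiv (Φ : A ⊕ D ≃ B ⊕ D) : A ⊕ B ≃ B ⊕ A where
  toFun := matchingFun Φ
  invFun := matchingFun Φ.symm
  left_inv := matchingFun_symm_matchingFun Φ
  right_inv := matchingFun_symm_matchingFun Φ.symm

end MatchingOfEquiv

lemma hasPMpers_of_forall_dinf_le (X : Fin m → ℝ × ℝ) (Y : Fin k → ℝ × ℝ)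
    (Φ : Fin m ⊕ ℝ × ℕ ≃ Fin k ⊕ ℝ × ℕ) {lam : ℝ}
    (hΦ : ∀ z, dinf (dgmPos X z) (dgmPos Y (Φ z)) ≤ lam) : HasPMpers X Y lam := by
  refine ⟨matchingOfEquiv Φ, ?_⟩
  rintro (i | j)
  · have hi := hΦ (.inl i)
    rcases h : Φ (.inl i) with j | ⟨x, n⟩ <;> rw [h] at hi
    · simpa [matchingOfEquiv, matchingFun, h, posP, posQ, dgmPos] using hi
    · simpa [matchingOfEquiv, matchingFun, h, posP, posQ] using
        (dinf_projΔ_le (X i) x).trans hi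
  · rcases h : Φ.symm (.inl j) with i | ⟨x, n⟩
    · simp [matchingOfEquiv, matchingFun, h]
    · have hj := hΦ (.inr (x, n))
      rw [Φ.eq_symm_apply.1 h.symm, dinf_comm] at hj
      simpa [matchingOfEquiv, matchingFun, h, posP, posQ, dinf_comm (projΔ _)] using
        (dinf_projΔ_le (Y j) x).trans hj

lemma ofReal_le_Winf (X : Fin m → ℝ × ℝ) (Y : Fin k → ℝ × ℝ) {lam : ℝ}
    (hleast : IsLeast {lam : ℝ | 0 ≤ lam ∧ HasPMpers X Y lam} lam) :
    ENNReal.ofReal lam ≤ Winf X Y := by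
  refine le_iInf fun Φ => ?_
  set S := ⨆ z, ENNReal.ofReal (dinf (dgmPos X z) (dgmPos Y (Φ z)))
  rcases eq_or_ne S ⊤ with hS | hS
  · exact hS ▸ le_top
  have hle : ∀ z, dinf (dgmPos X z) (dgmPos Y (Φ z)) ≤ S.toReal := fun z =>
    (ENNReal.ofReal_le_iff_le_toReal hS).1 (le_iSup (fun z => ENNReal.ofReal _) z)
  rw [← ENNReal.ofReal_toReal hS]
  exact ENNReal.ofReal_le_ofReal
    (hleast.2 ⟨ENNReal.toReal_nonneg, hasPMpers_of_forall_dinf_le X Y Φ hle⟩)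

theorem stmt14_general (m k : ℕ) (X : Fin m → ℝ × ℝ) (Y : Fin k → ℝ × ℝ) :
    (∀ lam lam' : ℝ, 0 ≤ lam → lam ≤ lam' → HasPMpers X Y lam → HasPMpers X Y lam') ∧
    (∃ lam : ℝ, 0 ≤ lam ∧ HasPMpers X Y lam ∧
      (∀ μ : ℝ, 0 ≤ μ → HasPMpers X Y μ → lam ≤ μ) ∧
      ENNReal.ofReal lam = Winf X Y) := by
  refine ⟨fun _ _ _ hle => hasPMpers_mono X Y hle, ?_⟩
  obtain ⟨lam, hleast⟩ := exists_isLeast_hasPMpers X Y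
  obtain ⟨hlam, hPM⟩ := hleast.1
  exact ⟨lam, hlam, hPM, fun μ hμ hμPM => hleast.2 ⟨hμ, hμPM⟩,
    le_antisymm (ofReal_le_Winf X Y hleast) (Winf_le_of_hasPMpers X Y hlam hPM)⟩

/-- For finite multisets `X`, `Y` of points strictly above the diagonal, feasibility of
the bipartite graph `G_λ(X,Y)` is monotone in `λ`, and the minimum feasible `λ ≥ 0`
exists and equals the bottleneck distance `W∞(X,Y)` of the two persistence diagrams. -/
theorem stmt14 (m k : ℕ) (X : Fin m → ℝ × ℝ) (Y : Fin k → ℝ × ℝ)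
    (hX : ∀ i, (X i).1 < (X i).2) (hY : ∀ j, (Y j).1 < (Y j).2) :
    (∀ lam lam' : ℝ, 0 ≤ lam → lam ≤ lam' → HasPMpers X Y lam → HasPMpers X Y lam') ∧
    (∃ lam : ℝ, 0 ≤ lam ∧ HasPMpers X Y lam ∧
      (∀ μ : ℝ, 0 ≤ μ → HasPMpers X Y μ → lam ≤ μ) ∧
      ENNReal.ofReal lam = Winf X Y) :=
  stmt14_general m k X Y
end

section
/- Let f be a flow on the edges of a bipartite graph on P ⊔ R whose support graph H(f) contains a cycle. Color the edges of the cycle alternately red and blue (this is possible since every cycle in a bipartite graph has even length), let Δ be the minimum flow value over the blue edges, and define f' by adding Δ to the flow on every red edge of the cycle and subtracting Δ from the flow on every blue edge. Then f' has the same total outflow at every vertex of P and the same total inflow at every vertex of R as f, all values of f' are nonnegative, and the support H(f') is a proper subgraph of H(f). -/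
open scoped Classical

lemma sum_ind_eq {β : Type*} [Fintype β] [DecidableEq β] (c : β) (Δ : ℝ) :
    ∑ b, (if b = c then Δ else 0) = Δ := by
  simp

/-- Cancelling flow around a cycle of the support graph: given a flow `f` on a bipartite
graph on `P ⊔ R` whose support contains a cycle `p₀, r₀, p₁, r₁, …, p_{k−1}, r_{k−1}`
(blue edges `(pᵢ, rᵢ)`, red edges `(p_{i+1}, rᵢ)`, indices mod `k`), let `Δ` be the
minimum flow value over the blue edges and let `f'` add `Δ` to every red edge and
subtract `Δ` from every blue edge. Then `f'` has the same outflow at every vertex of `P`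
and the same inflow at every vertex of `R`, is nonnegative, and its support is a proper
subgraph of the support of `f`. -/
theorem stmt15 {P R : Type*} [Fintype P] [Fintype R] [DecidableEq P] [DecidableEq R]
    (f : P → R → ℝ) (hnn : ∀ a b, 0 ≤ f a b)
    (k : ℕ) [NeZero k] (hk : 2 ≤ k)
    (p : Fin k → P) (r : Fin k → R)
    (hp : Function.Injective p) (hr : Function.Injective r)
    (hblue : ∀ i, 0 < f (p i) (r i))
    (hred : ∀ i, 0 < f (p (i + 1)) (r i)) :
    ∃ Δ : ℝ,
      (∀ i, Δ ≤ f (p i) (r i)) ∧ (∃ i, Δ = f (p i) (r i)) ∧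
      ∃ f' : P → R → ℝ,
        (∀ a b, f' a b =
          if ∃ i, a = p (i + 1) ∧ b = r i then f a b + Δ
          else if ∃ i, a = p i ∧ b = r i then f a b - Δ
          else f a b) ∧
        (∀ a, ∑ b, f' a b = ∑ b, f a b) ∧
        (∀ b, ∑ a, f' a b = ∑ a, f a b) ∧
        (∀ a b, 0 ≤ f' a b) ∧
        {x : P × R | 0 < f' x.1 x.2} ⊂ {x : P × R | 0 < f x.1 x.2} := by
  have hone : (1 : Fin k) ≠ 0 := by
    have : k ≠ 1 := by omega
    simpa [Fin.one_eq_zero_iff] using this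
  have hsucc : ∀ i : Fin k, i + 1 ≠ i := by
    intro i h
    apply hone
    have := congrArg (fun x => x - i) h
    simpa [add_sub_cancel_right] using this
  -- Δ
  have hne : (Finset.univ : Finset (Fin k)).Nonempty := Finset.univ_nonempty
  set Δ : ℝ := Finset.univ.inf' hne (fun i => f (p i) (r i)) with hΔdef
  have hΔle : ∀ i, Δ ≤ f (p i) (r i) := fun i =>
    Finset.inf'_le _ (Finset.mem_univ i)
  have hΔpos : 0 < Δ := by
    rw [hΔdef, Finset.lt_inf'_iff]
    intro i _; exact hblue i
  obtain ⟨i₀, _, hi₀⟩ := Finset.exists_mem_eq_inf' hne (fun i => f (p i) (r i))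
  refine ⟨Δ, hΔle, ⟨i₀, hi₀⟩, ?_⟩
  set Red : P → R → Prop := fun a b => ∃ i, a = p (i + 1) ∧ b = r i with hRed
  set Blue : P → R → Prop := fun a b => ∃ i, a = p i ∧ b = r i with hBlue
  have hdisj : ∀ a b, Red a b → Blue a b → False := by
    rintro a b ⟨i, ha, hb⟩ ⟨j, ha', hb'⟩
    have hij : i = j := hr (hb ▸ hb')
    subst hij
    exact hsucc i (hp (ha ▸ ha'))
  set f' : P → R → ℝ := fun a b =>
    if Red a b then f a b + Δ else if Blue a b then f a b - Δ else f a b with hf'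
  have hsplit : ∀ a b, f' a b =
      f a b + (if Red a b then Δ else 0) - (if Blue a b then Δ else 0) := by
    intro a b
    by_cases h1 : Red a b
    · have h2 : ¬ Blue a b := fun h => hdisj a b h1 h
      simp [hf', h1, h2]
    · by_cases h2 : Blue a b
      · simp [hf', h1, h2]
      · simp [hf', h1, h2]
  refine ⟨f', fun a b => rfl, ?_, ?_, ?_, ?_⟩
  · -- row sums
    intro a
    simp only [hsplit]
    rw [Finset.sum_sub_distrib, Finset.sum_add_distrib]
    by_cases ha : ∃ j, a = p j
    · obtain ⟨j, rfl⟩ := ha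
      have hredsum : ∑ b, (if Red (p j) b then Δ else 0) = Δ := by
        rw [show (∑ b, (if Red (p j) b then Δ else 0))
            = ∑ b, (if b = r (j - 1) then Δ else 0) from ?_, sum_ind_eq]
        refine Finset.sum_congr rfl fun b _ => ?_
        congr 1
        simp only [eq_iff_iff]
        constructor
        · rintro ⟨i, hpi, rfl⟩
          have : j = i + 1 := hp hpi
          rw [this, add_sub_cancel_right]
        · rintro rfl
          exact ⟨j - 1, by rw [sub_add_cancel], rfl⟩
      have hbluesum : ∑ b, (if Blue (p j) b then Δ else 0) = Δ := by
        rw [show (∑ b, (if Blue (p j) b then Δ else 0))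
            = ∑ b, (if b = r j then Δ else 0) from ?_, sum_ind_eq]
        refine Finset.sum_congr rfl fun b _ => ?_
        congr 1
        simp only [eq_iff_iff]
        constructor
        · rintro ⟨i, hpi, rfl⟩
          rw [hp hpi]
        · rintro rfl; exact ⟨j, rfl, rfl⟩
      rw [hredsum, hbluesum]; ring
    · have h1 : ∀ b, ¬ Red a b := by
        rintro b ⟨i, hpi, _⟩; exact ha ⟨i + 1, hpi⟩
      have h2 : ∀ b, ¬ Blue a b := by
        rintro b ⟨i, hpi, _⟩; exact ha ⟨i, hpi⟩
      simp [h1, h2]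
  · -- column sums
    intro b
    simp only [hsplit]
    rw [Finset.sum_sub_distrib, Finset.sum_add_distrib]
    by_cases hb : ∃ j, b = r j
    · obtain ⟨j, rfl⟩ := hb
      have hredsum : ∑ a, (if Red a (r j) then Δ else 0) = Δ := by
        rw [show (∑ a, (if Red a (r j) then Δ else 0))
            = ∑ a, (if a = p (j + 1) then Δ else 0) from ?_, sum_ind_eq]
        refine Finset.sum_congr rfl fun a _ => ?_
        congr 1
        simp only [eq_iff_iff]
        constructor
        · rintro ⟨i, rfl, hri⟩
          rw [hr hri]
        · rintro rfl; exact ⟨j, rfl, rfl⟩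
      have hbluesum : ∑ a, (if Blue a (r j) then Δ else 0) = Δ := by
        rw [show (∑ a, (if Blue a (r j) then Δ else 0))
            = ∑ a, (if a = p j then Δ else 0) from ?_, sum_ind_eq]
        refine Finset.sum_congr rfl fun a _ => ?_
        congr 1
        simp only [eq_iff_iff]
        constructor
        · rintro ⟨i, rfl, hri⟩
          rw [hr hri]
        · rintro rfl; exact ⟨j, rfl, rfl⟩
      rw [hredsum, hbluesum]; ring
    · have h1 : ∀ a, ¬ Red a (b) := by
        rintro a ⟨i, _, hri⟩; exact hb ⟨i, hri⟩
      have h2 : ∀ a, ¬ Blue a (b) := by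
        rintro a ⟨i, _, hri⟩; exact hb ⟨i, hri⟩
      simp [h1, h2]
  · -- nonneg
    intro a b
    by_cases h1 : Red a b
    · simp only [hf', h1, if_pos]
      have := hnn a b; linarith
    · by_cases h2 : Blue a b
      · simp only [hf', h1, h2, if_neg, if_pos, not_false_iff]
        obtain ⟨i, rfl, rfl⟩ := h2
        have := hΔle i; linarith
      · simp only [hf', h1, h2, if_neg, not_false_iff]
        exact hnn a b
  · -- strict subset
    rw [Set.ssubset_def]
    constructor
    · rintro ⟨a, b⟩ hx
      simp only [Set.mem_setOf_eq] at hx ⊢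
      by_cases h1 : Red a b
      · obtain ⟨i, rfl, rfl⟩ := h1; exact hred i
      · by_cases h2 : Blue a b
        · simp only [hf', h1, h2, if_neg, if_pos, not_false_iff] at hx
          linarith
        · simp only [hf', h1, h2, if_neg, not_false_iff] at hx
          exact hx
    · intro hsub
      have hmem : ((p i₀, r i₀) : P × R) ∈ {x : P × R | 0 < f x.1 x.2} := hblue i₀
      have := hsub hmem
      simp only [Set.mem_setOf_eq] at this
      have h1 : ¬ Red (p i₀) (r i₀) := by
        rintro ⟨i, hpi, hri⟩
        have : i = i₀ := hr hri.symm
        subst this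
        exact hsucc i (hp hpi.symm)
      have h2 : Blue (p i₀) (r i₀) := ⟨i₀, rfl, rfl⟩
      simp only [hf', h1, h2, if_neg, if_pos, not_false_iff] at this
      linarith [hi₀]
end
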